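/- arXiv:1707.07428 — 9 statements merged into one kernel-verified Lean document; each statement's English description precedes it below -/
import Mathlib

section
/- Let a group $G$ act on a group $K$ preserving each term of an extended N-series $K_*=(K_n)_{n\geq 0}$ of $K$ (i.e., $g(K_n)=K_n$ for all $g\in G$, $n\geq 0$). Define $\mathcal{F}_m^{K_*}(G)=\{g\in G\mid g(k)k^{-1}\in K_{m+n}\text{ for all }k\in K_n,\ n\geq 0\}$. Then $(\mathcal{F}_m^{K_*}(G))_{m\geq 0}$ is an extended N-series of $G$, i.e., $[\mathcal{F}_m^{K_*}(G),\mathcal{F}_n^{K_*}(G)]\leq \mathcal{F}_{m+n}^{K_*}(G)$ for all $m,n\geq 0$. -/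
/-!
Write `g • k` for `φ g k`. If `g ∈ 𝓕_m` and `h ∈ 𝓕_n`, then for
`k ∈ K_p`, with `b = (h • k) k⁻¹ ∈ K_{n+p}` and `c = (g • k) k⁻¹ ∈ K_{m+p}`,
`(g • h • k) (h • g • k)⁻¹ = ((g • b) b⁻¹) ⁅b, c⁆ ((h • c) c⁻¹)⁻¹`,
and all three factors lie in `K_{m+n+p}`. Since `⁅g, h⁆ = (g * h) (h * g)⁻¹`, applying this to
`(h * g)⁻¹ • k` gives `⁅g, h⁆ ∈ 𝓕_{m+n}`.
-/

open scoped commutatorElement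

section JohnsonFiltration

variable {G K : Type*} [Group G] [Group K]

def johnsonFiltration (φ : G →* MulAut K) (Kf : ℕ → Subgroup K) (m : ℕ) : Set G :=
  {g | ∀ n, ∀ k ∈ Kf n, φ g k * k⁻¹ ∈ Kf (m + n)}

variable {φ : G →* MulAut K} {Kf : ℕ → Subgroup K}

theorem mem_johnsonFiltration_zero (hpres : ∀ g n, ∀ k ∈ Kf n, φ g k ∈ Kf n) (g : G) :
    g ∈ johnsonFiltration φ Kf 0 := fun n k hk => by
  rw [zero_add]
  exact mul_mem (hpres g n k hk) (inv_mem hk)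

theorem one_mem_johnsonFiltration (m : ℕ) : (1 : G) ∈ johnsonFiltration φ Kf m :=
  fun n k _ => by simp

theorem mul_mem_johnsonFiltration (hpres : ∀ g n, ∀ k ∈ Kf n, φ g k ∈ Kf n) {m : ℕ} {g h : G}
    (hg : g ∈ johnsonFiltration φ Kf m) (hh : h ∈ johnsonFiltration φ Kf m) :
    g * h ∈ johnsonFiltration φ Kf m := fun n k hk => by
  have hsplit : φ (g * h) k * k⁻¹ = (φ g (φ h k) * (φ h k)⁻¹) * (φ h k * k⁻¹) := by
    rw [map_mul, MulAut.mul_apply]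
    group
  rw [hsplit]
  exact mul_mem (hg n _ (hpres h n k hk)) (hh n k hk)

theorem inv_mem_johnsonFiltration (hpres : ∀ g n, ∀ k ∈ Kf n, φ g k ∈ Kf n) {m : ℕ} {g : G}
    (hg : g ∈ johnsonFiltration φ Kf m) : g⁻¹ ∈ johnsonFiltration φ Kf m := fun n k hk => by
  have h := hg n (φ g⁻¹ k) (hpres g⁻¹ n k hk)
  rw [← MulAut.mul_apply, ← map_mul, mul_inv_cancel, map_one, MulAut.one_apply] at h
  simpa using inv_mem h

theorem johnsonFiltration_antitone (hKf : Antitone Kf) : Antitone (johnsonFiltration φ Kf) :=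
  fun _ _ hle _ hg n k hk => hKf (Nat.add_le_add_right hle n) (hg n k hk)

theorem apply_apply_mul_inv_apply_apply_mem (hKf : Antitone Kf)
    (hcomm : ∀ i j, ⁅Kf i, Kf j⁆ ≤ Kf (i + j)) {m n p : ℕ} {g h : G}
    (hg : g ∈ johnsonFiltration φ Kf m) (hh : h ∈ johnsonFiltration φ Kf n) {k : K}
    (hk : k ∈ Kf p) : φ g (φ h k) * (φ h (φ g k))⁻¹ ∈ Kf (m + n + p) := by
  set b := φ h k * k⁻¹
  set c := φ g k * k⁻¹
  have hb : b ∈ Kf (n + p) := hh p k hk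
  have hc : c ∈ Kf (m + p) := hg p k hk
  have hgb : φ g b * b⁻¹ ∈ Kf (m + n + p) := add_assoc m n p ▸ hg _ b hb
  have hhc : φ h c * c⁻¹ ∈ Kf (m + n + p) := by
    convert hh _ c hc using 2
    ac_rfl
  have hbc : ⁅b, c⁆ ∈ Kf (m + n + p) :=
    hKf (by omega) (hcomm _ _ (Subgroup.commutator_mem_commutator hb hc))
  have hsplit : φ g (φ h k) * (φ h (φ g k))⁻¹ = (φ g b * b⁻¹) * ⁅b, c⁆ * (φ h c * c⁻¹)⁻¹ := by
    simp only [b, c, map_mul, map_inv, commutatorElement_def]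
    group
  rw [hsplit]
  exact mul_mem (mul_mem hgb hbc) (inv_mem hhc)

theorem commutator_mem_johnsonFiltration (hpres : ∀ g n, ∀ k ∈ Kf n, φ g k ∈ Kf n)
    (hKf : Antitone Kf) (hcomm : ∀ i j, ⁅Kf i, Kf j⁆ ≤ Kf (i + j)) {m n : ℕ} {g h : G}
    (hg : g ∈ johnsonFiltration φ Kf m) (hh : h ∈ johnsonFiltration φ Kf n) :
    ⁅g, h⁆ ∈ johnsonFiltration φ Kf (m + n) := fun p k hk => by
  have key := apply_apply_mul_inv_apply_apply_mem hKf hcomm hg hh (hpres (h * g)⁻¹ p k hk)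
  have hgh : φ g (φ h (φ (h * g)⁻¹ k)) = φ ⁅g, h⁆ k := by
    rw [commutatorElement_def, mul_inv_rev, map_mul, map_mul, map_mul, map_mul]
    simp only [MulAut.mul_apply, map_inv]
  have hhg : φ h (φ g (φ (h * g)⁻¹ k)) = k := by
    rw [← MulAut.mul_apply, ← MulAut.mul_apply, ← map_mul, ← map_mul,
      mul_inv_cancel, map_one, MulAut.one_apply]
  rwa [hgh, hhg] at key

end JohnsonFiltration

theorem johnson_filtration_is_extended_NSeries_general {G K : Type*} [Group G] [Group K]
    (φ : G →* MulAut K) (Kf : ℕ → Subgroup K)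
    (hdesc : ∀ i, Kf (i + 1) ≤ Kf i)
    (hcomm : ∀ i j, ⁅Kf i, Kf j⁆ ≤ Kf (i + j))
    (hact : ∀ g n, Subgroup.map (φ g).toMonoidHom (Kf n) = Kf n) :
    let F : ℕ → G → Prop := fun m g => ∀ n, ∀ k ∈ Kf n, φ g k * k⁻¹ ∈ Kf (m + n)
    (∀ g : G, F 0 g) ∧
    (∀ m, F m (1 : G)) ∧
    (∀ m g h, F m g → F m h → F m (g * h)) ∧
    (∀ m g, F m g → F m g⁻¹) ∧
    (∀ m g, F (m + 1) g → F m g) ∧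
    (∀ m n g h, F m g → F n h → F (m + n) ⁅g, h⁆) := by
  intro F
  have hpres : ∀ g n, ∀ k ∈ Kf n, φ g k ∈ Kf n := fun g n k hk =>
    hact g n ▸ Subgroup.mem_map_of_mem _ hk
  have hKf : Antitone Kf := antitone_nat_of_succ_le hdesc
  exact ⟨mem_johnsonFiltration_zero hpres, one_mem_johnsonFiltration,
    fun _ _ _ => mul_mem_johnsonFiltration hpres, fun _ _ => inv_mem_johnsonFiltration hpres,
    fun m _ hg => johnsonFiltration_antitone hKf m.le_succ hg,
    fun _ _ _ _ => commutator_mem_johnsonFiltration hpres hKf hcomm⟩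

/-- If a group `G` acts on a group `K` preserving each term of an extended N-series
`K_*` of `K`, then the Johnson filtration
`𝓕ₘ(G) = {g ∈ G | g(k)k⁻¹ ∈ K_{m+n} for all k ∈ Kₙ, n ≥ 0}`
is an extended N-series of `G`: each `𝓕ₘ(G)` is a subgroup, the filtration is
descending with `𝓕₀(G) = G`, and `[𝓕ₘ(G), 𝓕ₙ(G)] ≤ 𝓕_{m+n}(G)`. -/
theorem johnson_filtration_is_extended_NSeries {G K : Type*} [Group G] [Group K]
    (φ : G →* MulAut K) (Kf : ℕ → Subgroup K)
    (hK0 : Kf 0 = ⊤) (hdesc : ∀ i, Kf (i + 1) ≤ Kf i)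
    (hcomm : ∀ i j, ⁅Kf i, Kf j⁆ ≤ Kf (i + j))
    (hact : ∀ g n, Subgroup.map (φ g).toMonoidHom (Kf n) = Kf n) :
    let F : ℕ → G → Prop := fun m g => ∀ n, ∀ k ∈ Kf n, φ g k * k⁻¹ ∈ Kf (m + n)
    (∀ g : G, F 0 g) ∧
    (∀ m, F m (1 : G)) ∧
    (∀ m g h, F m g → F m h → F m (g * h)) ∧
    (∀ m g, F m g → F m g⁻¹) ∧
    (∀ m g, F (m + 1) g → F m g) ∧
    (∀ m n g h, F m g → F n h → F (m + n) ⁅g, h⁆) :=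
  johnson_filtration_is_extended_NSeries_general φ Kf hdesc hcomm hact
end

section
/- Let an extended N-series $G_*$ act on an extended N-series $K_*$. For each $m\geq 1$ and $g\in G_m$, the map $\tau_m(g)_0:K_0/K_1\to K_m/K_{m+1}$ defined by $\tau_m(g)_0(aK_1)=[g,a]K_{m+1}$ is a well-defined 1-cocycle: $\tau_m(g)_0(ab)=\tau_m(g)_0(a)+{}^a(\tau_m(g)_0(b))$ for all $a,b\in K_0$, where ${}^a$ denotes the action of $aK_1$ induced by conjugation. -/
section TwistedCommutator

variable {K F : Type*} [Group K] [FunLike F K K] [MonoidHomClass F K K]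

/-- `a ↦ f a * a⁻¹` is a crossed homomorphism for the conjugation action of `K` on itself. -/
theorem map_mul_mul_inv_eq_mul_conj (f : F) (a b : K) :
    f (a * b) * (a * b)⁻¹ = (f a * a⁻¹) * (a * (f b * b⁻¹) * a⁻¹) := by
  simp only [map_mul]
  group

theorem inv_mul_map_mul_mul_inv_eq_conj (f : F) (a b : K) :
    (f a * a⁻¹)⁻¹ * (f (a * b) * (a * b)⁻¹) = a * (f b * b⁻¹) * a⁻¹ := by
  rw [map_mul_mul_inv_eq_mul_conj, inv_mul_cancel_left]

end TwistedCommutator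

theorem Subgroup.normal_of_commutator_le_of_eq_top {K : Type*} [Group K] {Kf : ℕ → Subgroup K}
    (hK0 : Kf 0 = ⊤) (hcomm : ∀ i j, ⁅Kf i, Kf j⁆ ≤ Kf (i + j)) (n : ℕ) : (Kf n).Normal :=
  Subgroup.commutator_top_left_le_iff.mp (by simpa [hK0] using hcomm 0 n)

theorem johnson_tau_zero_cocycle_general {G K : Type*} [Group G] [Group K]
    (φ : G →* MulAut K) (Kf : ℕ → Subgroup K)
    (hK0 : Kf 0 = ⊤)
    (hcomm : ∀ i j, ⁅Kf i, Kf j⁆ ≤ Kf (i + j))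
    (G' : ℕ → Subgroup G)
    (hact : ∀ m n, ∀ g ∈ G' m, ∀ k ∈ Kf n, φ g k * k⁻¹ ∈ Kf (m + n)) :
    ∀ m, 1 ≤ m → ∀ g ∈ G' m,
      -- the values `[g,a]` lie in `Kₘ`
      (∀ a : K, φ g a * a⁻¹ ∈ Kf m) ∧
      -- well-definedness: `aK₁ = a'K₁` implies `[g,a]K_{m+1} = [g,a']K_{m+1}`
      (∀ a a' : K, a⁻¹ * a' ∈ Kf 1 →
        (φ g a * a⁻¹)⁻¹ * (φ g a' * a'⁻¹) ∈ Kf (m + 1)) ∧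
      -- the 1-cocycle identity `τₘ(g)₀(ab) = τₘ(g)₀(a) + ᵃ(τₘ(g)₀(b))`
      (∀ a b : K,
        (φ g (a * b) * (a * b)⁻¹)⁻¹ *
          ((φ g a * a⁻¹) * (a * (φ g b * b⁻¹) * a⁻¹)) ∈ Kf (m + 1)) := by
  intro m _ g hg
  refine ⟨fun a ↦ hact m 0 g hg a (hK0 ▸ Subgroup.mem_top a), fun a a' ha ↦ ?_, fun a b ↦ ?_⟩
  · have hnormal := Subgroup.normal_of_commutator_le_of_eq_top hK0 hcomm (m + 1)
    rw [← mul_inv_cancel_left a a', inv_mul_map_mul_mul_inv_eq_conj]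
    exact hnormal.conj_mem _ (hact m 1 g hg _ ha) a
  · rw [map_mul_mul_inv_eq_mul_conj, inv_mul_cancel]
    exact one_mem _

/-- Let an extended N-series `G_*` act on an extended N-series `K_*`.  For `m ≥ 1`
and `g ∈ Gₘ`, the map `τₘ(g)₀ : K₀/K₁ → Kₘ/K_{m+1}`, `aK₁ ↦ [g,a]K_{m+1}`, is a
well-defined 1-cocycle: `τₘ(g)₀(ab) = τₘ(g)₀(a) + ᵃ(τₘ(g)₀(b))`, where `[g,a] = g(a)a⁻¹`
and `ᵃ` is the conjugation action.  All identities are congruences mod `K_{m+1}`. -/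
theorem johnson_tau_zero_cocycle {G K : Type*} [Group G] [Group K]
    (φ : G →* MulAut K) (Kf : ℕ → Subgroup K)
    (hK0 : Kf 0 = ⊤) (hdesc : ∀ i, Kf (i + 1) ≤ Kf i)
    (hcomm : ∀ i j, ⁅Kf i, Kf j⁆ ≤ Kf (i + j))
    (G' : ℕ → Subgroup G)
    (hG'0 : G' 0 = ⊤) (hG'desc : ∀ i, G' (i + 1) ≤ G' i)
    (hG'comm : ∀ i j, ⁅G' i, G' j⁆ ≤ G' (i + j))
    (hact : ∀ m n, ∀ g ∈ G' m, ∀ k ∈ Kf n, φ g k * k⁻¹ ∈ Kf (m + n)) :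
    ∀ m, 1 ≤ m → ∀ g ∈ G' m,
      -- the values `[g,a]` lie in `Kₘ`
      (∀ a : K, φ g a * a⁻¹ ∈ Kf m) ∧
      -- well-definedness: `aK₁ = a'K₁` implies `[g,a]K_{m+1} = [g,a']K_{m+1}`
      (∀ a a' : K, a⁻¹ * a' ∈ Kf 1 →
        (φ g a * a⁻¹)⁻¹ * (φ g a' * a'⁻¹) ∈ Kf (m + 1)) ∧
      -- the 1-cocycle identity `τₘ(g)₀(ab) = τₘ(g)₀(a) + ᵃ(τₘ(g)₀(b))`
      (∀ a b : K,
        (φ g (a * b) * (a * b)⁻¹)⁻¹ *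
          ((φ g a * a⁻¹) * (a * (φ g b * b⁻¹) * a⁻¹)) ∈ Kf (m + 1)) :=
  johnson_tau_zero_cocycle_general φ Kf hK0 hcomm G' hact
end

section
/- Let an extended N-series $G_*$ act on an extended N-series $K_*$. For $m\geq 1$, $g\in G_m$, $a\in K_i$ and $b\in K_j$ with $i,j\geq 1$, one has $[g,[a,b]]\equiv [[g,a],b]\cdot[a,[g,b]]\pmod{K_{m+i+j+1}}$; consequently the map $\tau_m(g)_i:K_i/K_{i+1}\to K_{m+i}/K_{m+i+1}$, $aK_{i+1}\mapsto [g,a]K_{m+i+1}$, is a degree $m$ derivation of the graded Lie algebra $\bigoplus_{i\geq 1}K_i/K_{i+1}$. -/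
open scoped commutatorElement

/-!
Write `p = [g,a]` and `q = [g,b]`, so that `g` sends `a ↦ p a` and `b ↦ q b`, and
`[g,[a,b]] = [p a, q b] [a,b]⁻¹`. Modulo `K_{m+i+j+1}` every commutator of weight at least
`m+i+j+1` vanishes; this makes `p, q, a, b` commute with all the double commutators occurring
in the expansion of `[p a, q b]`, which then collapses to `[p,b] [a,q] [a,b]`.
Well-definedness and additivity of `τₘ(g)ᵢ` are the identities
`[g,a]⁻¹ [g,a c] = a [g,c] a⁻¹` and `[g,a b]⁻¹ [g,a] [g,b] = [a, [g,b]⁻¹]`.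
-/

theorem Commute.commutatorElement_right {Q : Type*} [Group Q] {c a b : Q}
    (ha : Commute c a) (hb : Commute c b) : Commute c ⁅a, b⁆ := by
  simpa only [commutatorElement_def] using
    ((ha.mul_right hb).mul_right ha.inv_right).mul_right hb.inv_right

theorem commutatorElement_mul_mul_of_commute {Q : Type*} [Group Q] {u x v y : Q}
    (huv : ⁅u, v⁆ = 1)
    (hu_xv : Commute u ⁅x, v⁆) (hy_xv : Commute y ⁅x, v⁆)
    (hu_xy : Commute u ⁅x, y⁆) (hv_xy : Commute v ⁅x, y⁆)
    (hx_uy : Commute x ⁅u, y⁆) (hy_uy : Commute y ⁅u, y⁆) (hv_uy : Commute v ⁅u, y⁆) :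
    ⁅u * x, v * y⁆ = ⁅u, y⁆ * ⁅x, v⁆ * ⁅x, y⁆ := by
  have expand : ⁅u * x, v * y⁆ =
      u * (⁅x, v⁆ * (v * ⁅x, y⁆ * v⁻¹)) * u⁻¹ * (⁅u, v⁆ * (v * ⁅u, y⁆ * v⁻¹)) := by
    group
  have hxv_uy : Commute ⁅x, v⁆ ⁅u, y⁆ := hu_xv.symm.commutatorElement_right hy_xv.symm
  have hxy_uy : Commute ⁅x, y⁆ ⁅u, y⁆ := (hx_uy.symm.commutatorElement_right hy_uy.symm).symm
  rw [expand, huv, one_mul, hv_xy.eq, hv_uy.eq, mul_inv_cancel_right, mul_inv_cancel_right,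
    (hu_xv.mul_right hu_xy).eq, mul_inv_cancel_right, (hxv_uy.mul_left hxy_uy).eq, mul_assoc]

structure IsExtendedNSeries {K : Type*} [Group K] (Kf : ℕ → Subgroup K) : Prop where
  zero_eq_top : Kf 0 = ⊤
  succ_le : ∀ i, Kf (i + 1) ≤ Kf i
  commutator_le : ∀ i j, ⁅Kf i, Kf j⁆ ≤ Kf (i + j)

/-- The commutator `[σ, a]` computed in `K ⋊ MulAut K`. -/
def autCommutator {K : Type*} [Group K] (σ : MulAut K) (a : K) : K := σ a * a⁻¹

namespace IsExtendedNSeries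

variable {K : Type*} [Group K] {Kf : ℕ → Subgroup K}

theorem antitone (hK : IsExtendedNSeries Kf) : Antitone Kf :=
  antitone_nat_of_succ_le hK.succ_le

theorem normal (hK : IsExtendedNSeries Kf) (n : ℕ) : (Kf n).Normal :=
  Subgroup.commutator_top_left_le_iff.mp <| by
    simpa only [hK.zero_eq_top, zero_add] using hK.commutator_le 0 n

theorem commutatorElement_mem (hK : IsExtendedNSeries Kf) {s t n : ℕ} {x y : K}
    (hx : x ∈ Kf s) (hy : y ∈ Kf t) (hn : n ≤ s + t) : ⁅x, y⁆ ∈ Kf n :=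
  hK.antitone hn (hK.commutator_le s t (Subgroup.commutator_mem_commutator hx hy))

theorem commute_mk'_commutatorElement (hK : IsExtendedNSeries Kf) {N s t r : ℕ}
    [(Kf N).Normal] {x y z : K} (hx : x ∈ Kf s) (hy : y ∈ Kf t) (hz : z ∈ Kf r)
    (hN : N ≤ s + t + r) :
    Commute (QuotientGroup.mk' (Kf N) x)
      ⁅QuotientGroup.mk' (Kf N) y, QuotientGroup.mk' (Kf N) z⁆ := by
  rw [← map_commutatorElement, ← commutatorElement_eq_one_iff_commute, ← map_commutatorElement,
    QuotientGroup.mk'_apply, QuotientGroup.eq_one_iff]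
  exact hK.commutatorElement_mem hx (hK.commutatorElement_mem hy hz le_rfl) (by omega)

variable {σ : MulAut K} {m : ℕ}

theorem autCommutator_congr_of_inv_mul_mem (hK : IsExtendedNSeries Kf)
    (hσ : ∀ n, ∀ k ∈ Kf n, autCommutator σ k ∈ Kf (m + n)) {n : ℕ} {a a' : K}
    (h : a⁻¹ * a' ∈ Kf n) : (autCommutator σ a)⁻¹ * autCommutator σ a' ∈ Kf (m + n) := by
  obtain ⟨c, hc, rfl⟩ : ∃ c ∈ Kf n, a' = a * c := ⟨a⁻¹ * a', h, by group⟩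
  have conj : (autCommutator σ a)⁻¹ * autCommutator σ (a * c) = a * autCommutator σ c * a⁻¹ := by
    simp only [autCommutator, map_mul]
    group
  rw [conj]
  exact (hK.normal _).conj_mem _ (hσ n c hc) a

theorem autCommutator_mul_congr (hK : IsExtendedNSeries Kf)
    (hσ : ∀ n, ∀ k ∈ Kf n, autCommutator σ k ∈ Kf (m + n)) {i j n : ℕ} {a b : K}
    (ha : a ∈ Kf i) (hb : b ∈ Kf j) (hn : n ≤ i + (m + j)) :
    (autCommutator σ (a * b))⁻¹ * (autCommutator σ a * autCommutator σ b) ∈ Kf n := by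
  have comm : (autCommutator σ (a * b))⁻¹ * (autCommutator σ a * autCommutator σ b) =
      ⁅a, (autCommutator σ b)⁻¹⁆ := by
    simp only [autCommutator, map_mul]
    group
  rw [comm]
  exact hK.commutatorElement_mem ha (inv_mem (hσ j b hb)) hn

theorem autCommutator_commutatorElement_congr (hK : IsExtendedNSeries Kf) (hm : 1 ≤ m)
    (hσ : ∀ n, ∀ k ∈ Kf n, autCommutator σ k ∈ Kf (m + n)) {i j : ℕ} (hi : 1 ≤ i) (hj : 1 ≤ j)
    {a b : K} (ha : a ∈ Kf i) (hb : b ∈ Kf j) :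
    (⁅autCommutator σ a, b⁆ * ⁅a, autCommutator σ b⁆)⁻¹ * autCommutator σ ⁅a, b⁆ ∈
      Kf (m + i + j + 1) := by
  set N := m + i + j + 1
  have := hK.normal N
  set p := autCommutator σ a
  set q := autCommutator σ b
  have hp : p ∈ Kf (m + i) := hσ i a ha
  have hq : q ∈ Kf (m + j) := hσ j b hb
  have hσab : autCommutator σ ⁅a, b⁆ = ⁅p * a, q * b⁆ * ⁅a, b⁆⁻¹ := by
    simp only [autCommutator, map_commutatorElement, p, q, inv_mul_cancel_right]
  rw [hσab, ← QuotientGroup.eq, ← QuotientGroup.mk'_apply, ← QuotientGroup.mk'_apply]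
  set π := QuotientGroup.mk' (Kf N)
  have hπ : π ⁅p, q⁆ = 1 := (QuotientGroup.eq_one_iff _).mpr
    (hK.commutatorElement_mem hp hq (by omega))
  simp only [map_mul, map_inv, map_commutatorElement] at hπ ⊢
  rw [commutatorElement_mul_mul_of_commute hπ
      (hK.commute_mk'_commutatorElement hp ha hq (by omega))
      (hK.commute_mk'_commutatorElement hb ha hq (by omega))
      (hK.commute_mk'_commutatorElement hp ha hb (by omega))
      (hK.commute_mk'_commutatorElement hq ha hb (by omega))
      (hK.commute_mk'_commutatorElement ha hp hb (by omega))
      (hK.commute_mk'_commutatorElement hb hp hb (by omega))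
      (hK.commute_mk'_commutatorElement hq hp hb (by omega)),
    mul_inv_cancel_right]

end IsExtendedNSeries

theorem johnson_tau_positive_derivation_general {G K : Type*} [Group G] [Group K]
    (φ : G →* MulAut K) (Kf : ℕ → Subgroup K)
    (hK0 : Kf 0 = ⊤) (hdesc : ∀ i, Kf (i + 1) ≤ Kf i)
    (hcomm : ∀ i j, ⁅Kf i, Kf j⁆ ≤ Kf (i + j))
    (G' : ℕ → Subgroup G)
    (hact : ∀ m n, ∀ g ∈ G' m, ∀ k ∈ Kf n, φ g k * k⁻¹ ∈ Kf (m + n)) :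
    ∀ m, 1 ≤ m → ∀ g ∈ G' m,
      -- well-definedness of `τₘ(g)ᵢ`
      (∀ i, 1 ≤ i → ∀ a ∈ Kf i, ∀ a' : K, a⁻¹ * a' ∈ Kf (i + 1) →
        (φ g a * a⁻¹)⁻¹ * (φ g a' * a'⁻¹) ∈ Kf (m + i + 1)) ∧
      -- additivity of `τₘ(g)ᵢ`
      (∀ i, 1 ≤ i → ∀ a ∈ Kf i, ∀ b ∈ Kf i,
        (φ g (a * b) * (a * b)⁻¹)⁻¹ *
          ((φ g a * a⁻¹) * (φ g b * b⁻¹)) ∈ Kf (m + i + 1)) ∧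
      -- the Leibniz congruence `[g,[a,b]] ≡ [[g,a],b] ⬝ [a,[g,b]] (mod K_{m+i+j+1})`
      (∀ i j, 1 ≤ i → 1 ≤ j → ∀ a ∈ Kf i, ∀ b ∈ Kf j,
        (⁅φ g a * a⁻¹, b⁆ * ⁅a, φ g b * b⁻¹⁆)⁻¹ *
          (φ g ⁅a, b⁆ * ⁅a, b⁆⁻¹) ∈ Kf (m + i + j + 1)) := by
  have hK : IsExtendedNSeries Kf := ⟨hK0, hdesc, hcomm⟩
  intro m hm g hg
  have hσ : ∀ n, ∀ k ∈ Kf n, autCommutator (φ g) k ∈ Kf (m + n) :=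
    fun n => hact m n g hg
  exact ⟨fun i _ a _ a' h => hK.autCommutator_congr_of_inv_mul_mem hσ h,
    fun i hi a ha b hb => hK.autCommutator_mul_congr hσ ha hb (by omega),
    fun i j hi hj a ha b hb => hK.autCommutator_commutatorElement_congr hm hσ hi hj ha hb⟩

/-- Let an extended N-series `G_*` act on an extended N-series `K_*`.  For `m ≥ 1`,
`g ∈ Gₘ`, `a ∈ Kᵢ`, `b ∈ Kⱼ` with `i, j ≥ 1`, one has
`[g,[a,b]] ≡ [[g,a],b] ⬝ [a,[g,b]]  (mod K_{m+i+j+1})`,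
where `[g,a] = g(a)a⁻¹`.  Consequently (well-definedness and additivity also being
recorded), `τₘ(g)ᵢ : Kᵢ/K_{i+1} → K_{m+i}/K_{m+i+1}`, `aK_{i+1} ↦ [g,a]K_{m+i+1}`,
is a degree `m` derivation of the associated graded Lie algebra. -/
theorem johnson_tau_positive_derivation {G K : Type*} [Group G] [Group K]
    (φ : G →* MulAut K) (Kf : ℕ → Subgroup K)
    (hK0 : Kf 0 = ⊤) (hdesc : ∀ i, Kf (i + 1) ≤ Kf i)
    (hcomm : ∀ i j, ⁅Kf i, Kf j⁆ ≤ Kf (i + j))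
    (G' : ℕ → Subgroup G)
    (hG'0 : G' 0 = ⊤) (hG'desc : ∀ i, G' (i + 1) ≤ G' i)
    (hG'comm : ∀ i j, ⁅G' i, G' j⁆ ≤ G' (i + j))
    (hact : ∀ m n, ∀ g ∈ G' m, ∀ k ∈ Kf n, φ g k * k⁻¹ ∈ Kf (m + n)) :
    ∀ m, 1 ≤ m → ∀ g ∈ G' m,
      -- well-definedness of `τₘ(g)ᵢ`
      (∀ i, 1 ≤ i → ∀ a ∈ Kf i, ∀ a' : K, a⁻¹ * a' ∈ Kf (i + 1) →
        (φ g a * a⁻¹)⁻¹ * (φ g a' * a'⁻¹) ∈ Kf (m + i + 1)) ∧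
      -- additivity of `τₘ(g)ᵢ`
      (∀ i, 1 ≤ i → ∀ a ∈ Kf i, ∀ b ∈ Kf i,
        (φ g (a * b) * (a * b)⁻¹)⁻¹ *
          ((φ g a * a⁻¹) * (φ g b * b⁻¹)) ∈ Kf (m + i + 1)) ∧
      -- the Leibniz congruence `[g,[a,b]] ≡ [[g,a],b] ⬝ [a,[g,b]] (mod K_{m+i+j+1})`
      (∀ i j, 1 ≤ i → 1 ≤ j → ∀ a ∈ Kf i, ∀ b ∈ Kf j,
        (⁅φ g a * a⁻¹, b⁆ * ⁅a, φ g b * b⁻¹⁆)⁻¹ *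
          (φ g ⁅a, b⁆ * ⁅a, b⁆⁻¹) ∈ Kf (m + i + j + 1)) :=
  johnson_tau_positive_derivation_general φ Kf hK0 hdesc hcomm G' hact
end

section
/- Let $L_\bullet$ be an extended graded Lie algebra. For derivations $d$ of degree $m\geq 1$ and $d'$ of degree $n\geq 1$ of $L_\bullet$, the family $[d,d']$ defined by $[d,d']_0(a)=d_n(d'_0(a))-d'_m(d_0(a))-[d_0(a),d'_0(a)]$ for $a\in L_0$ and $[d,d']_i(a)=d_{n+i}(d'_i(a))-d'_{m+i}(d_i(a))$ for $a\in L_i$, $i\geq 1$, is a derivation of $L_\bullet$ of degree $m+n$, and this bracket makes $\mathrm{Der}_+(L_\bullet)=\bigoplus_{m\geq 1}\mathrm{Der}_m(L_\bullet)$ a graded Lie algebra. -/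
/-- An extended graded Lie algebra: a group `L₀` acting on a graded Lie algebra
`L₊` over `ℤ`.  The positive part is encoded as an ambient abelian group `A`
with a grading `grade : ℕ → AddSubgroup A` (degrees `≥ 1`), a biadditive
alternating bracket satisfying the Jacobi identity and respecting the grading,
and an action of `L₀` by graded Lie algebra automorphisms. -/
structure EgLieData (L₀ : Type*) [Group L₀] (A : Type*) [AddCommGroup A] where
  grade : ℕ → AddSubgroup A
  br : A → A → A
  br_add_left : ∀ x y z : A, br (x + y) z = br x z + br y z
  br_add_right : ∀ x y z : A, br x (y + z) = br x y + br x z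
  br_self : ∀ x : A, br x x = 0
  jacobi : ∀ x y z : A, br x (br y z) + br y (br z x) + br z (br x y) = 0
  br_grade : ∀ i j, 1 ≤ i → 1 ≤ j → ∀ x ∈ grade i, ∀ y ∈ grade j, br x y ∈ grade (i + j)
  act : L₀ → A → A
  act_one : ∀ x : A, act 1 x = x
  act_mul : ∀ g h x, act (g * h) x = act g (act h x)
  act_add : ∀ g x y, act g (x + y) = act g x + act g y
  act_br : ∀ g x y, act g (br x y) = br (act g x) (act g y)
  act_grade : ∀ g i, ∀ x ∈ grade i, act g x ∈ grade i

/-- A degree `m ≥ 1` derivation `d = (d₀, d)` of an extended graded Lie algebra: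
`d` is a degree `m` derivation of the positive part, `d₀ : L₀ → Lₘ` is a
1-cocycle, and the compatibility `d(ᵍx) = [d₀(g), ᵍx] + ᵍ(d(x))` holds. -/
structure IsEgDer {L₀ : Type*} [Group L₀] {A : Type*} [AddCommGroup A]
    (E : EgLieData L₀ A) (m : ℕ) (d₀ : L₀ → A) (d : A → A) : Prop where
  one_le : 1 ≤ m
  d₀_grade : ∀ g, d₀ g ∈ E.grade m
  d_add : ∀ x y : A, d (x + y) = d x + d y
  d_grade : ∀ i, 1 ≤ i → ∀ x ∈ E.grade i, d x ∈ E.grade (m + i)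
  leibniz : ∀ x y : A, d (E.br x y) = E.br (d x) y + E.br x (d y)
  cocycle : ∀ g h : L₀, d₀ (g * h) = d₀ g + E.act g (d₀ h)
  compat : ∀ (g : L₀) (x : A), d (E.act g x) = E.br (d₀ g) (E.act g x) + E.act g (d x)

/-- Degree `0` component of the bracket of two derivations:
`[d,d']₀(a) = d(d'₀(a)) − d'(d₀(a)) − [d₀(a), d'₀(a)]`. -/
def brDer₀ {L₀ : Type*} [Group L₀] {A : Type*} [AddCommGroup A]
    (E : EgLieData L₀ A) (d₀ d'₀ : L₀ → A) (d d' : A → A) : L₀ → A :=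
  fun g => d (d'₀ g) - d' (d₀ g) - E.br (d₀ g) (d'₀ g)

/-- Positive-degree component of the bracket of two derivations:
`[d,d']ᵢ(a) = d(d'(a)) − d'(d(a))`. -/
def brDerP {A : Type*} [AddCommGroup A] (d d' : A → A) : A → A :=
  fun x => d (d' x) - d' (d x)


section EgHelpers

lemma addhom_zero' {A : Type*} [AddCommGroup A] {d : A → A}
    (h : ∀ x y : A, d (x + y) = d x + d y) : d 0 = 0 := by
  have h0 := h 0 0
  rw [add_zero] at h0
  exact (add_eq_left.mp h0.symm)

lemma addhom_sub' {A : Type*} [AddCommGroup A] {d : A → A}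
    (h : ∀ x y : A, d (x + y) = d x + d y) (x y : A) :
    d (x - y) = d x - d y := by
  have hxy : d (x - y) + d y = d x := by rw [← h, sub_add_cancel]
  exact eq_sub_of_add_eq hxy

variable {L₀ : Type*} [Group L₀] {A : Type*} [AddCommGroup A] (E : EgLieData L₀ A)

lemma EgLieData.br_anti (x y : A) : E.br x y = - E.br y x := by
  have h := E.br_self (x + y)
  rw [E.br_add_left, E.br_add_right, E.br_add_right, E.br_self x, E.br_self y] at h
  have h' : E.br x y + E.br y x = 0 := by
    rw [zero_add, add_zero] at h; exact h
  exact eq_neg_of_add_eq_zero_left h'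

lemma EgLieData.br_sub_left (x y z : A) : E.br (x - y) z = E.br x z - E.br y z :=
  addhom_sub' (d := fun a => E.br a z) (fun a b => E.br_add_left a b z) x y

lemma EgLieData.br_sub_right (x y z : A) : E.br x (y - z) = E.br x y - E.br x z :=
  addhom_sub' (E.br_add_right x) y z

lemma EgLieData.br_zero_right (x : A) : E.br x 0 = 0 :=
  addhom_zero' (E.br_add_right x)

lemma EgLieData.br_neg_right (x y : A) : E.br x (-y) = - E.br x y := by
  rw [← zero_sub, E.br_sub_right, E.br_zero_right, zero_sub]

lemma EgLieData.br_br (a b y : A) :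
    E.br (E.br a b) y = E.br a (E.br b y) - E.br b (E.br a y) := by
  have J := E.jacobi a b y
  rw [E.br_anti y a, E.br_neg_right, E.br_anti y (E.br a b)] at J
  have J2 : E.br a (E.br b y) - E.br b (E.br a y) - E.br (E.br a b) y = 0 := by
    rw [← J]; abel
  exact (sub_eq_zero.mp J2).symm

lemma EgLieData.act_sub (g : L₀) (x y : A) : E.act g (x - y) = E.act g x - E.act g y :=
  addhom_sub' (E.act_add g) x y

end EgHelpers

/-- The bracket of derivations of degrees `m` and `n` of an extended graded Lie
algebra is a derivation of degree `m + n`, and this bracket makes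
`Der₊(L_•) = ⊕_{m ≥ 1} Derₘ(L_•)` a graded Lie algebra (biadditive, alternating,
antisymmetric, Jacobi). -/
theorem der_bracket_graded_lie {L₀ : Type*} [Group L₀] {A : Type*} [AddCommGroup A]
    (E : EgLieData L₀ A) {m n p : ℕ}
    {d₀ d'₀ d''₀ e₀ : L₀ → A} {d d' d'' e : A → A}
    (hd : IsEgDer E m d₀ d) (hd' : IsEgDer E n d'₀ d') (hd'' : IsEgDer E p d''₀ d'')
    (he : IsEgDer E n e₀ e) :
    -- the bracket is a derivation of degree `m + n`
    IsEgDer E (m + n) (brDer₀ E d₀ d'₀ d d') (brDerP d d') ∧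
    -- biadditivity in the second variable
    (brDer₀ E d₀ (fun g => d'₀ g + e₀ g) d (fun x => d' x + e x) =
      fun g => brDer₀ E d₀ d'₀ d d' g + brDer₀ E d₀ e₀ d e g) ∧
    (brDerP d (fun x => d' x + e x) = fun x => brDerP d d' x + brDerP d e x) ∧
    -- alternating
    (brDer₀ E d₀ d₀ d d = fun _ => (0 : A)) ∧
    (brDerP d d = fun _ => (0 : A)) ∧
    -- antisymmetry
    (∀ g, brDer₀ E d₀ d'₀ d d' g + brDer₀ E d'₀ d₀ d' d g = 0) ∧
    (∀ x, brDerP d d' x + brDerP d' d x = 0) ∧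
    -- the Jacobi identity for the bracket of derivations
    (∀ g : L₀,
      brDer₀ E d₀ (brDer₀ E d'₀ d''₀ d' d'') d (brDerP d' d'') g +
      brDer₀ E d'₀ (brDer₀ E d''₀ d₀ d'' d) d' (brDerP d'' d) g +
      brDer₀ E d''₀ (brDer₀ E d₀ d'₀ d d') d'' (brDerP d d') g = 0) ∧
    (∀ x : A,
      brDerP d (brDerP d' d'') x + brDerP d' (brDerP d'' d) x +
      brDerP d'' (brDerP d d') x = 0) := by
  have dsub := addhom_sub' hd.d_add
  have d'sub := addhom_sub' hd'.d_add
  have d''sub := addhom_sub' hd''.d_add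
  refine ⟨?_, ?_, ?_, ?_, ?_, ?_, ?_, ?_, ?_⟩
  · constructor
    · exact hd.one_le.trans (Nat.le_add_right m n)
    · intro g
      have h1 : d (d'₀ g) ∈ E.grade (m + n) :=
        hd.d_grade n hd'.one_le _ (hd'.d₀_grade g)
      have h2 : d' (d₀ g) ∈ E.grade (m + n) := by
        have := hd'.d_grade m hd.one_le _ (hd.d₀_grade g)
        rwa [Nat.add_comm n m] at this
      have h3 : E.br (d₀ g) (d'₀ g) ∈ E.grade (m + n) :=
        E.br_grade m n hd.one_le hd'.one_le _ (hd.d₀_grade g) _ (hd'.d₀_grade g)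
      exact AddSubgroup.sub_mem _ (AddSubgroup.sub_mem _ h1 h2) h3
    · intro x y
      simp only [brDerP, hd.d_add, hd'.d_add]
      abel
    · intro i hi x hx
      have h1 : d (d' x) ∈ E.grade (m + n + i) := by
        have := hd.d_grade (n + i) (hi.trans (Nat.le_add_left i n)) _
          (hd'.d_grade i hi x hx)
        rwa [← Nat.add_assoc] at this
      have h2 : d' (d x) ∈ E.grade (m + n + i) := by
        have := hd'.d_grade (m + i) (hi.trans (Nat.le_add_left i m)) _
          (hd.d_grade i hi x hx)
        have e : n + (m + i) = m + n + i := by omega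
        rwa [e] at this
      exact AddSubgroup.sub_mem _ h1 h2
    · intro x y
      simp only [brDerP, hd.leibniz, hd'.leibniz, hd.d_add, hd'.d_add,
        E.br_sub_left, E.br_sub_right]
      abel
    · intro g h
      simp only [brDer₀, hd.cocycle, hd'.cocycle, hd.d_add, hd'.d_add,
        hd.compat, hd'.compat, E.br_add_left, E.br_add_right, E.act_sub, E.act_br]
      rw [E.br_anti (E.act g (d₀ h)) (d'₀ g)]
      abel
    · intro g x
      simp only [brDerP, hd.compat, hd'.compat, hd.d_add, hd'.d_add,
        hd.leibniz, hd'.leibniz, brDer₀, E.br_sub_left, E.act_sub, E.br_add_right]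
      rw [E.br_br (d₀ g) (d'₀ g) (E.act g x)]
      abel
  · funext g
    simp only [brDer₀, hd.d_add, E.br_add_right]
    abel
  · funext x
    simp only [brDerP, hd.d_add]
    abel
  · funext g
    simp only [brDer₀, E.br_self, sub_zero, sub_self]
  · funext x
    simp only [brDerP, sub_self]
  · intro g
    simp only [brDer₀]
    rw [E.br_anti (d'₀ g) (d₀ g)]
    abel
  · intro x
    simp only [brDerP]
    abel
  · intro g
    simp only [brDer₀, brDerP, dsub, d'sub, d''sub,
      hd.leibniz, hd'.leibniz, hd''.leibniz, E.br_sub_left, E.br_sub_right]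
    have J := E.jacobi (d₀ g) (d'₀ g) (d''₀ g)
    rw [E.br_anti (d (d'₀ g)) (d''₀ g), E.br_anti (d' (d''₀ g)) (d₀ g),
      E.br_anti (d'' (d₀ g)) (d'₀ g)]
    rw [← J]
    abel
  · intro x
    simp only [brDerP, dsub, d'sub, d''sub]
    abel
end

section
/- Let an extended N-series $G_*$ act on an extended N-series $K_*$. Then the induced maps $\bar\tau_m:G_m/G_{m+1}\to\mathrm{Der}_m(\overline{K}_\bullet)$ ($m\geq 1$) preserve Lie brackets: for $g\in G_m$, $g'\in G_n$, $\bar\tau_{m+n}([g,g']G_{m+n+1})=[\bar\tau_m(gG_{m+1}),\bar\tau_n(g'G_{n+1})]$. -/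
/-!
Write `[g, a] = g(a)a⁻¹` (`actComm`). Expanding `g(g'(x))` and `g'(g(x))` gives the exact
identity `(gg')(x) = X(x) · (g'g)(x)` with `X(x) = [g,[g',x]] ⁅[g',x],[g,x]⁆ [g',[g,x]]⁻¹`
(`bracketExpansion`), hence `[⁅g,g'⁆, a] = X((g'g)⁻¹ a)`. As `m, n ≥ 1`, `(g'g)⁻¹ a ≡ a` modulo
`K_{i+1}`, and modulo `K_{m+n+i+1}` the value of `X` only depends on its argument modulo
`K_{i+1}`, because `[g, -]` and the commutator induce well-defined maps on the graded pieces.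
Finally, modulo `K_{m+n+i+1}` the term `⁅[g',a],[g,a]⁆` commutes with `[g',[g,a]]`, and it
vanishes there when `i ≥ 1`.
-/

open scoped commutatorElement

section

variable {G K : Type*} [Group G] [Group K]

theorem QuotientGroup.mk_eq_mk_of_le {H H' : Subgroup K} (hle : H ≤ H') {x y : K}
    (h : (x : K ⧸ H) = y) : (x : K ⧸ H') = y :=
  QuotientGroup.eq.2 (hle (QuotientGroup.eq.1 h))

def actComm (φ : G →* MulAut K) (g : G) (a : K) : K := φ g a * a⁻¹

def bracketExpansion (φ : G →* MulAut K) (g g' : G) (a : K) : K :=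
  actComm φ g (actComm φ g' a) * ⁅actComm φ g' a, actComm φ g a⁆ *
    (actComm φ g' (actComm φ g a))⁻¹

def FiltrationActs (φ : G →* MulAut K) (G' : ℕ → Subgroup G) (Kf : ℕ → Subgroup K) : Prop :=
  ∀ m n, ∀ g ∈ G' m, ∀ k ∈ Kf n, actComm φ g k ∈ Kf (m + n)

section Exact

variable (φ : G →* MulAut K)

theorem actComm_mul_right (g : G) (x k : K) :
    actComm φ g (x * k) = actComm φ g x * (x * actComm φ g k * x⁻¹) := by
  simp only [actComm, map_mul]; group

theorem apply_mul_apply_eq (g g' : G) (a : K) :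
    φ (g * g') a = bracketExpansion φ g g' a * φ (g' * g) a := by
  simp only [bracketExpansion, actComm, commutatorElement_def, map_mul, MulAut.mul_apply, map_inv]
  group

theorem actComm_commutatorElement (g g' : G) (a : K) :
    actComm φ ⁅g, g'⁆ a = bracketExpansion φ g g' (φ (g' * g)⁻¹ a) := by
  have h : ⁅g, g'⁆ = g * g' * (g' * g)⁻¹ := by group
  rw [actComm, h, map_mul, MulAut.mul_apply, apply_mul_apply_eq, ← MulAut.mul_apply, ← map_mul,
    mul_inv_cancel, map_one, MulAut.one_apply, mul_inv_cancel_right]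

end Exact

section Filtration

variable {φ : G →* MulAut K} {G' : ℕ → Subgroup G} {Kf : ℕ → Subgroup K}

theorem FiltrationActs.apply_mem (hact : FiltrationActs φ G' Kf) (hanti : Antitone Kf)
    {m j : ℕ} {g : G} (hg : g ∈ G' m) {x : K} (hx : x ∈ Kf j) : φ g x ∈ Kf j := by
  simpa [actComm] using mul_mem (hanti (Nat.le_add_left j m) (hact m j g hg x hx)) hx

variable [hKf : ∀ j, (Kf j).Normal]

theorem mk_commute {p r s : ℕ} (hanti : Antitone Kf) (hcomm : ∀ i j, ⁅Kf i, Kf j⁆ ≤ Kf (i + j))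
    (hs : s ≤ p + r) {x y : K} (hx : x ∈ Kf p) (hy : y ∈ Kf r) :
    Commute (x : K ⧸ Kf s) (y : K ⧸ Kf s) := by
  have h : (x * y)⁻¹ * (y * x) = ⁅y⁻¹, x⁻¹⁆ := by simp only [commutatorElement_def]; group
  refine QuotientGroup.eq.2 ?_
  rw [h]
  exact hanti (hs.trans_eq (add_comm p r))
    (hcomm r p (Subgroup.commutator_mem_commutator (inv_mem hy) (inv_mem hx)))

theorem mk_commutatorElement_mul_left {s r : ℕ} (hcomm : ∀ i j, ⁅Kf i, Kf j⁆ ≤ Kf (i + j))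
    (x : K) {k y : K} (hk : k ∈ Kf s) (hy : y ∈ Kf r) :
    ((⁅x * k, y⁆ : K) : K ⧸ Kf (s + r)) = (⁅x, y⁆ : K) := by
  have h : ⁅x, y⁆⁻¹ * ⁅x * k, y⁆ = (⁅x, y⁆⁻¹ * x) * ⁅k, y⁆ * (⁅x, y⁆⁻¹ * x)⁻¹ := by
    simp only [commutatorElement_def]; group
  refine (QuotientGroup.eq.2 ?_).symm
  rw [h]
  exact (hKf _).conj_mem _ (hcomm s r (Subgroup.commutator_mem_commutator hk hy)) _

theorem mk_commutatorElement_mul_right {p t : ℕ} (hcomm : ∀ i j, ⁅Kf i, Kf j⁆ ≤ Kf (i + j))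
    {x : K} (y : K) {l : K} (hx : x ∈ Kf p) (hl : l ∈ Kf t) :
    ((⁅x, y * l⁆ : K) : K ⧸ Kf (p + t)) = (⁅x, y⁆ : K) := by
  have h : ⁅x, y⁆⁻¹ * ⁅x, y * l⁆ = y * ⁅x, l⁆ * y⁻¹ := by
    simp only [commutatorElement_def]; group
  refine (QuotientGroup.eq.2 ?_).symm
  rw [h]
  exact (hKf _).conj_mem _ (hcomm p t (Subgroup.commutator_mem_commutator hx hl)) _

theorem mk_commutatorElement_eq {p r : ℕ} (hanti : Antitone Kf)
    (hcomm : ∀ i j, ⁅Kf i, Kf j⁆ ≤ Kf (i + j)) {x x' y y' : K} (hx : x ∈ Kf p) (hy : y ∈ Kf r)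
    (hxx' : (x : K ⧸ Kf (p + 1)) = x') (hyy' : (y : K ⧸ Kf (r + 1)) = y') :
    ((⁅x, y⁆ : K) : K ⧸ Kf (p + r + 1)) = (⁅x', y'⁆ : K) := by
  obtain ⟨k, hk, rfl⟩ : ∃ k ∈ Kf (p + 1), x' = x * k := ⟨_, QuotientGroup.eq.1 hxx', by group⟩
  obtain ⟨l, hl, rfl⟩ : ∃ l ∈ Kf (r + 1), y' = y * l := ⟨_, QuotientGroup.eq.1 hyy', by group⟩
  have hyl : y * l ∈ Kf r := mul_mem hy (hanti (Nat.le_succ r) hl)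
  calc ((⁅x, y⁆ : K) : K ⧸ Kf (p + r + 1)) = (⁅x, y * l⁆ : K) :=
        (mk_commutatorElement_mul_right hcomm y hx hl).symm
    _ = (⁅x * k, y * l⁆ : K) :=
        (QuotientGroup.mk_eq_mk_of_le (hanti (show p + r + 1 ≤ p + 1 + r by omega))
          (mk_commutatorElement_mul_left hcomm x hk hyl)).symm

theorem FiltrationActs.mk_actComm_eq (hact : FiltrationActs φ G' Kf) {m j : ℕ} {g : G}
    (hg : g ∈ G' m) {x y : K} (hxy : (x : K ⧸ Kf j) = y) :
    ((actComm φ g x : K) : K ⧸ Kf (m + j)) = (actComm φ g y : K) := by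
  obtain ⟨k, hk, rfl⟩ : ∃ k ∈ Kf j, y = x * k := ⟨_, QuotientGroup.eq.1 hxy, by group⟩
  refine QuotientGroup.eq.2 ?_
  rw [actComm_mul_right, inv_mul_cancel_left]
  exact (hKf _).conj_mem _ (hact m j g hg k hk) x

theorem FiltrationActs.mk_apply_eq (hact : FiltrationActs φ G' Kf) {m j : ℕ} {g : G}
    (hg : g ∈ G' m) {x : K} (hx : x ∈ Kf j) : ((φ g x : K) : K ⧸ Kf (m + j)) = x :=
  QuotientGroup.eq.2 ((hKf _).mem_comm (by simpa [actComm] using inv_mem (hact m j g hg x hx)))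

theorem FiltrationActs.mk_bracketExpansion_eq (hact : FiltrationActs φ G' Kf)
    (hanti : Antitone Kf) (hcomm : ∀ i j, ⁅Kf i, Kf j⁆ ≤ Kf (i + j))
    {m n i : ℕ} {g g' : G} (hg : g ∈ G' m) (hg' : g' ∈ G' n) {a a' : K} (ha : a ∈ Kf i)
    (haa' : (a : K ⧸ Kf (i + 1)) = a') :
    ((bracketExpansion φ g g' a : K) : K ⧸ Kf (m + n + i + 1)) =
      (bracketExpansion φ g g' a' : K) := by
  have hbb' := hact.mk_actComm_eq hg haa'
  have hcc' := hact.mk_actComm_eq hg' haa'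
  have h₁ := QuotientGroup.mk_eq_mk_of_le (hanti (show m + n + i + 1 ≤ m + (n + (i + 1)) by omega))
    (hact.mk_actComm_eq hg hcc')
  have h₂ := QuotientGroup.mk_eq_mk_of_le (hanti (show m + n + i + 1 ≤ n + (m + (i + 1)) by omega))
    (hact.mk_actComm_eq hg' hbb')
  have h₃ := QuotientGroup.mk_eq_mk_of_le
    (hanti (show m + n + i + 1 ≤ n + i + (m + i) + 1 by omega))
    (mk_commutatorElement_eq hanti hcomm (hact n i g' hg' a ha) (hact m i g hg a ha) hcc' hbb')
  simp only [bracketExpansion, QuotientGroup.mk_mul, QuotientGroup.mk_inv]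
  rw [h₁, h₂, h₃]

theorem FiltrationActs.mk_actComm_commutatorElement (hact : FiltrationActs φ G' Kf)
    (hanti : Antitone Kf) (hcomm : ∀ i j, ⁅Kf i, Kf j⁆ ≤ Kf (i + j)) {m n i : ℕ} (hm : 1 ≤ m)
    (hn : 1 ≤ n) {g g' : G} (hg : g ∈ G' m) (hg' : g' ∈ G' n) {a : K} (ha : a ∈ Kf i) :
    ((actComm φ ⁅g, g'⁆ a : K) : K ⧸ Kf (m + n + i + 1)) =
      (actComm φ g (actComm φ g' a) * (actComm φ g' (actComm φ g a))⁻¹ *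
        ⁅actComm φ g a, actComm φ g' a⁆⁻¹ : K) := by
  have ha' : (a : K ⧸ Kf (i + 1)) = φ (g' * g)⁻¹ a :=
    calc (a : K ⧸ Kf (i + 1)) = φ g'⁻¹ a :=
          (QuotientGroup.mk_eq_mk_of_le (hanti (show i + 1 ≤ n + i by omega))
            (hact.mk_apply_eq (inv_mem hg') ha)).symm
      _ = φ g⁻¹ (φ g'⁻¹ a) :=
          (QuotientGroup.mk_eq_mk_of_le (hanti (show i + 1 ≤ m + i by omega))
            (hact.mk_apply_eq (inv_mem hg) (hact.apply_mem hanti (inv_mem hg') ha))).symm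
      _ = φ (g' * g)⁻¹ a := by rw [mul_inv_rev, map_mul, MulAut.mul_apply]
  have hcomm' : Commute ((⁅actComm φ g a, actComm φ g' a⁆ : K) : K ⧸ Kf (m + n + i + 1))
      (actComm φ g' (actComm φ g a) : K) :=
    mk_commute hanti hcomm (show m + n + i + 1 ≤ m + i + (n + i) + (n + (m + i)) by omega)
      (hcomm _ _ (Subgroup.commutator_mem_commutator (hact m i g hg a ha) (hact n i g' hg' a ha)))
      (hact n (m + i) g' hg' _ (hact m i g hg a ha))
  rw [actComm_commutatorElement, ← hact.mk_bracketExpansion_eq hanti hcomm hg hg' ha ha',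
    bracketExpansion, ← commutatorElement_inv]
  simp only [QuotientGroup.mk_mul, QuotientGroup.mk_inv, mul_assoc]
  rw [hcomm'.inv_inv.eq]

end Filtration

end

theorem johnson_morphism_bracket_general {G K : Type*} [Group G] [Group K]
    (φ : G →* MulAut K) (Kf : ℕ → Subgroup K)
    (hK0 : Kf 0 = ⊤) (hdesc : ∀ i, Kf (i + 1) ≤ Kf i)
    (hcomm : ∀ i j, ⁅Kf i, Kf j⁆ ≤ Kf (i + j))
    (G' : ℕ → Subgroup G)
    (hact : ∀ m n, ∀ g ∈ G' m, ∀ k ∈ Kf n, φ g k * k⁻¹ ∈ Kf (m + n)) :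
    ∀ m n, 1 ≤ m → 1 ≤ n → ∀ g ∈ G' m, ∀ g' ∈ G' n,
      -- in positive degrees `i ≥ 1`:
      (∀ i, 1 ≤ i → ∀ a ∈ Kf i,
        ((φ g (φ g' a * a⁻¹) * (φ g' a * a⁻¹)⁻¹) *
            (φ g' (φ g a * a⁻¹) * (φ g a * a⁻¹)⁻¹)⁻¹)⁻¹ *
          (φ ⁅g, g'⁆ a * a⁻¹) ∈ Kf (m + n + i + 1)) ∧
      -- in degree `0` (with the correction term `⁅[g,a],[g',a]⁆`):
      (∀ a : K,
        ((φ g (φ g' a * a⁻¹) * (φ g' a * a⁻¹)⁻¹) *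
            (φ g' (φ g a * a⁻¹) * (φ g a * a⁻¹)⁻¹)⁻¹ *
            ⁅φ g a * a⁻¹, φ g' a * a⁻¹⁆⁻¹)⁻¹ *
          (φ ⁅g, g'⁆ a * a⁻¹) ∈ Kf (m + n + 1)) := by
  intro m n hm hn g hg g' hg'
  have hanti : Antitone Kf := antitone_nat_of_succ_le hdesc
  have : ∀ j, (Kf j).Normal := fun j =>
    Subgroup.commutator_top_left_le_iff.1 (by simpa [hK0] using hcomm 0 j)
  have hact' : FiltrationActs φ G' Kf := hact
  refine ⟨fun i hi a ha => ?_, fun a => ?_⟩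
  · have hbc : ⁅actComm φ g a, actComm φ g' a⁆ ∈ Kf (m + n + i + 1) :=
      hanti (show m + n + i + 1 ≤ m + i + (n + i) by omega)
        (hcomm _ _ (Subgroup.commutator_mem_commutator (hact m i g hg a ha) (hact n i g' hg' a ha)))
    have h : ((actComm φ ⁅g, g'⁆ a : K) : K ⧸ Kf (m + n + i + 1)) =
        (actComm φ g (actComm φ g' a) * (actComm φ g' (actComm φ g a))⁻¹ : K) := by
      rw [hact'.mk_actComm_commutatorElement hanti hcomm hm hn hg hg' ha,
        QuotientGroup.mk_mul _ _ ⁅_, _⁆⁻¹, QuotientGroup.mk_inv,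
        (QuotientGroup.eq_one_iff _).2 hbc, inv_one, mul_one]
    exact QuotientGroup.eq.1 h.symm
  · have h0 : a ∈ Kf 0 := hK0 ▸ Subgroup.mem_top a
    exact QuotientGroup.eq.1 (hact'.mk_actComm_commutatorElement hanti hcomm hm hn hg hg' h0).symm

/-- Let an extended N-series `G_*` act on an extended N-series `K_*`.  The induced
Johnson homomorphisms `τ̄ₘ : Gₘ/G_{m+1} → Derₘ(K̄_•)` preserve Lie brackets: for
`g ∈ Gₘ`, `g' ∈ Gₙ` (`m, n ≥ 1`) and `a ∈ Kᵢ`,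
`[⁅g,g'⁆, a] ≡ [g,[g',a]] ⬝ [g',[g,a]]⁻¹ ⬝ (⁅[g,a],[g',a]⁆⁻¹ if i = 0)`
modulo `K_{m+n+i+1}`, where `[g,a] = g(a)a⁻¹` and `⁅g,g'⁆ = gg'g⁻¹g'⁻¹`. -/
theorem johnson_morphism_bracket {G K : Type*} [Group G] [Group K]
    (φ : G →* MulAut K) (Kf : ℕ → Subgroup K)
    (hK0 : Kf 0 = ⊤) (hdesc : ∀ i, Kf (i + 1) ≤ Kf i)
    (hcomm : ∀ i j, ⁅Kf i, Kf j⁆ ≤ Kf (i + j))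
    (G' : ℕ → Subgroup G)
    (hG'0 : G' 0 = ⊤) (hG'desc : ∀ i, G' (i + 1) ≤ G' i)
    (hG'comm : ∀ i j, ⁅G' i, G' j⁆ ≤ G' (i + j))
    (hact : ∀ m n, ∀ g ∈ G' m, ∀ k ∈ Kf n, φ g k * k⁻¹ ∈ Kf (m + n)) :
    ∀ m n, 1 ≤ m → 1 ≤ n → ∀ g ∈ G' m, ∀ g' ∈ G' n,
      -- in positive degrees `i ≥ 1`:
      (∀ i, 1 ≤ i → ∀ a ∈ Kf i,
        ((φ g (φ g' a * a⁻¹) * (φ g' a * a⁻¹)⁻¹) *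
            (φ g' (φ g a * a⁻¹) * (φ g a * a⁻¹)⁻¹)⁻¹)⁻¹ *
          (φ ⁅g, g'⁆ a * a⁻¹) ∈ Kf (m + n + i + 1)) ∧
      -- in degree `0` (with the correction term `⁅[g,a],[g',a]⁆`):
      (∀ a : K,
        ((φ g (φ g' a * a⁻¹) * (φ g' a * a⁻¹)⁻¹) *
            (φ g' (φ g a * a⁻¹) * (φ g a * a⁻¹)⁻¹)⁻¹ *
            ⁅φ g a * a⁻¹, φ g' a * a⁻¹⁆⁻¹)⁻¹ *
          (φ ⁅g, g'⁆ a * a⁻¹) ∈ Kf (m + n + 1)) :=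
  johnson_morphism_bracket_general φ Kf hK0 hdesc hcomm G' hact
end

section
/- Let an extended N-series $G_*$ act on an extended N-series $K_*$. The Johnson morphism $\bar\tau_\bullet:(G_m/G_{m+1})_{m\geq 0}\to\mathrm{Der}_\bullet(\overline{K}_\bullet)$ is injective in every degree if and only if $G_m=\mathcal{F}_m^{K_*}(G_0)$ for all $m\geq 0$, i.e., $G_*$ equals the Johnson filtration induced by $K_*$. -/
/-- Let an extended N-series `G_*` act on an extended N-series `K_*`.  The Johnson
morphism `τ̄_• : (Gₘ/G_{m+1})ₘ → Der_•(K̄_•)` is injective in every degree if and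
only if `G_*` equals the Johnson filtration induced by `K_*`.  Injectivity of
`τ̄ₘ` is expressed as: whenever `g, g' ∈ Gₘ` induce the same maps on all quotients
`Kᵢ/K_{m+i+1}`, then `gG_{m+1} = g'G_{m+1}`. -/
theorem johnson_morphism_injective_iff {G K : Type*} [Group G] [Group K]
    (φ : G →* MulAut K) (Kf : ℕ → Subgroup K)
    (hK0 : Kf 0 = ⊤) (hdesc : ∀ i, Kf (i + 1) ≤ Kf i)
    (hcomm : ∀ i j, ⁅Kf i, Kf j⁆ ≤ Kf (i + j))
    (G' : ℕ → Subgroup G)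
    (hG'0 : G' 0 = ⊤) (hG'desc : ∀ i, G' (i + 1) ≤ G' i)
    (hG'comm : ∀ i j, ⁅G' i, G' j⁆ ≤ G' (i + j))
    (hact : ∀ m n, ∀ g ∈ G' m, ∀ k ∈ Kf n, φ g k * k⁻¹ ∈ Kf (m + n)) :
    (∀ m, ∀ g ∈ G' m, ∀ g' ∈ G' m,
        (∀ i, ∀ a ∈ Kf i, (φ g a)⁻¹ * φ g' a ∈ Kf (m + i + 1)) →
        g⁻¹ * g' ∈ G' (m + 1)) ↔
    (∀ m, ∀ g : G, g ∈ G' m ↔ ∀ n, ∀ k ∈ Kf n, φ g k * k⁻¹ ∈ Kf (m + n)) := by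
  -- Each Kf j is normal-ish: closed under conjugation by arbitrary elements.
  have hnorm : ∀ j (x : K), x ∈ Kf j → ∀ c : K, c * x * c⁻¹ ∈ Kf j := by
    intro j x hx c
    have hc : c ∈ Kf 0 := by rw [hK0]; trivial
    have := hcomm 0 j (Subgroup.commutator_mem_commutator hc hx)
    rw [zero_add] at this
    have : (c * x * c⁻¹ * x⁻¹) * x ∈ Kf j := (Kf j).mul_mem (by simpa [commutatorElement_def] using this) hx
    simpa using this
  -- Every automorphism φ g preserves Kf n.
  have hpres : ∀ (g : G) (n : ℕ) (k : K), k ∈ Kf n → φ g k ∈ Kf n := by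
    intro g n k hk
    have hg : g ∈ G' 0 := by rw [hG'0]; trivial
    have := hact 0 n g hg k hk
    rw [zero_add] at this
    have : (φ g k * k⁻¹) * k ∈ Kf n := (Kf n).mul_mem this hk
    simpa using this
  constructor
  · intro hinj m g
    constructor
    · exact fun hg n k hk => hact m n g hg k hk
    · induction m with
      | zero => intro _; rw [hG'0]; trivial
      | succ m ih =>
        intro hg
        have hgm : g ∈ G' m := by
          apply ih
          intro n k hk
          exact hdesc (m + n) (by simpa [Nat.add_right_comm m 1 n] using hg n k hk)
        have h1 : (1 : G) ∈ G' m := (G' m).one_mem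
        have := hinj m 1 h1 g hgm ?_
        · simpa using this
        · intro i a ha
          have h := hg i a ha
          rw [show m + 1 + i = m + i + 1 by ring] at h
          have : a⁻¹ * ((φ g a * a⁻¹) * a) ∈ Kf (m + i + 1) := by
            have := hnorm (m + i + 1) _ h a⁻¹
            simpa [mul_assoc] using this
          simpa [mul_assoc] using this
  · intro hjf m g hg g' hg' hsame
    rw [hjf]
    intro n k hk
    have h := hsame n k hk
    have h2 : φ g⁻¹ ((φ g k)⁻¹ * φ g' k) ∈ Kf (m + n + 1) :=
      hpres g⁻¹ _ _ h
    have h3 : k⁻¹ * φ (g⁻¹ * g') k ∈ Kf (m + n + 1) := by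
      simpa [map_mul, map_inv] using h2
    have h4 := hnorm (m + n + 1) _ h3 k
    rw [show m + 1 + n = m + n + 1 by ring]
    simpa [mul_assoc] using h4
end

section
/- Let a group $G$ act on a group $K$ preserving an N-series $K_+=(K_m)_{m\geq 1}$ such that each quotient $K/K_m$ is torsion-free. Then each quotient $\mathcal{F}_m^{K_*}(G)/\mathcal{F}_{m+1}^{K_*}(G)$ ($m\geq 1$) of the Johnson filtration is torsion-free. -/
/-- Let a group `G` act on a group `K` preserving an N-series `K₊ = (Kₘ)_{m ≥ 1}`
(extended by `K₀ = K₁ = K`) such that each quotient `K/Kₘ` is torsion-free.  Then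
each graded quotient `𝓕ₘ(G)/𝓕_{m+1}(G)` of the Johnson filtration is
torsion-free: if `g ∈ 𝓕ₘ(G)` and `gʳ ∈ 𝓕_{m+1}(G)` for some `r ≥ 1`, then
`g ∈ 𝓕_{m+1}(G)`. -/
theorem johnson_filtration_torsionFree {G K : Type*} [Group G] [Group K]
    (φ : G →* MulAut K) (Kf : ℕ → Subgroup K)
    (hK1 : Kf 1 = ⊤) (hK0 : Kf 0 = Kf 1)
    (hdesc : ∀ i, Kf (i + 1) ≤ Kf i)
    (hcomm : ∀ i j, 1 ≤ i → 1 ≤ j → ⁅Kf i, Kf j⁆ ≤ Kf (i + j))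
    (hact : ∀ g n, ∀ k ∈ Kf n, φ g k ∈ Kf n)
    (htf : ∀ m, 1 ≤ m → ∀ x : K, ∀ r : ℕ, r ≠ 0 → x ^ r ∈ Kf m → x ∈ Kf m) :
    ∀ m, 1 ≤ m → ∀ g : G,
      (∀ n, ∀ k ∈ Kf n, φ g k * k⁻¹ ∈ Kf (m + n)) →
      ∀ r : ℕ, r ≠ 0 →
      (∀ n, ∀ k ∈ Kf n, φ (g ^ r) k * k⁻¹ ∈ Kf (m + 1 + n)) →
      (∀ n, ∀ k ∈ Kf n, φ g k * k⁻¹ ∈ Kf (m + 1 + n)) := by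
  intro m hm g hg r hr hgr n k hk
  -- antitonicity of the filtration
  have mono : ∀ i j : ℕ, i ≤ j → Kf j ≤ Kf i := by
    intro i j hij
    induction j with
    | zero => simp [Nat.le_zero.mp hij]
    | succ j ih =>
      rcases Nat.lt_or_ge i (j + 1) with h | h
      · exact (hdesc j).trans (ih (Nat.lt_succ_iff.mp h))
      · have : i = j + 1 := le_antisymm hij h
        simp [this]
  set a : K := φ g k * k⁻¹ with ha
  have haK : a ∈ Kf (m + n) := hg n k hk
  -- key claim: φ (g^s) k * k⁻¹ = c * a^s with c ∈ Kf (m+n+1)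
  have key : ∀ s : ℕ, ∃ c ∈ Kf (m + n + 1), φ (g ^ s) k * k⁻¹ = c * a ^ s := by
    intro s
    induction s with
    | zero => exact ⟨1, one_mem _, by simp⟩
    | succ s ih =>
      rcases ih with ⟨c, hc, hbc⟩
      set b : K := φ (g ^ s) k * k⁻¹ with hb
      have hbK : b ∈ Kf (m + n) := by
        rw [hbc]
        exact mul_mem (mono _ _ (Nat.le_succ _) hc)
          (pow_mem haK s)
      have hd : φ g b * b⁻¹ ∈ Kf (m + (m + n)) := hg (m + n) b hbK
      have hd' : φ g b * b⁻¹ ∈ Kf (m + n + 1) :=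
        mono _ _ (by omega) hd
      refine ⟨(φ g b * b⁻¹) * c, mul_mem hd' hc, ?_⟩
      have hexp : φ (g ^ (s + 1)) k = φ g b * (φ g k) := by
        have : φ (g ^ s) k = b * k := by
          rw [hb]; group
        have h2 : φ (g ^ (s + 1)) k = φ g (φ (g ^ s) k) := by
          rw [pow_succ', map_mul]; rfl
        rw [h2, this, map_mul]
      calc φ (g ^ (s + 1)) k * k⁻¹
          = (φ g b * b⁻¹) * (b * (φ g k * k⁻¹)) := by rw [hexp]; group
        _ = (φ g b * b⁻¹) * ((c * a ^ s) * a) := by rw [← hbc, ha]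
        _ = (φ g b * b⁻¹) * c * a ^ (s + 1) := by rw [pow_succ]; group
  rcases key r with ⟨c, hc, hcr⟩
  have har : a ^ r ∈ Kf (m + n + 1) := by
    have h1 : φ (g ^ r) k * k⁻¹ ∈ Kf (m + 1 + n) := hgr n k hk
    have h1' : φ (g ^ r) k * k⁻¹ ∈ Kf (m + n + 1) := by
      rwa [show m + n + 1 = m + 1 + n by omega]
    have : a ^ r = c⁻¹ * (φ (g ^ r) k * k⁻¹) := by rw [hcr]; group
    rw [this]
    exact mul_mem (inv_mem hc) h1'
  have : a ∈ Kf (m + n + 1) := htf (m + n + 1) (by omega) a r hr har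
  rwa [show m + 1 + n = m + n + 1 by omega]
end

section
/- Let $p$ be a prime and let a group $G$ act on a group $K$ preserving an N-series $K_+=(K_m)_{m\geq 1}$ satisfying $(K_m)^p\subseteq K_{mp}$ for all $m\geq 1$ (an N$_p$-series). Then the Johnson filtration $G_m=\mathcal{F}_m^{K_*}(G)$ satisfies $(G_m)^p\subseteq G_{mp}$ for all $m\geq 1$, i.e., its positive part is an N$_p$-series. -/
/-!
Put `t r = φ(gʳ) k · k⁻¹` for `k ∈ K_n`. Its `s`-th forward difference is `φ(gʳ) (δˢ k)` with
`δ x = φ(g) x · x⁻¹`, so it lies in `V s := K_{n+sm}`, and the claim is `t p ∈ V p`.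

Lazard's difference calculus: for an N-series `W`, the sequences whose `j`-th differences lie in
`W (a + j)` are closed under products, inverses, conjugation and commutators (with degrees adding),
by induction on the order of the differences. One then raises `t`, level by level, to a sequence
whose `j`-th differences lie in `V (max L (min j p))`, without changing whether its value at `p`
lies in `V p`. Modulo `V (L + 1)` the values live in an abelian group, where the Newton coefficients
of orders `1, …, L` at `0` are removed by dividing off binomial sequences `y ^ (r choose j)`; this
changes the value at `p` by `y ^ (p choose j)`, a `p`-th power because `p ∣ p choose j`, hence in
`V p`. At level `p` the value at `p` lies in `V p`.
-/

open scoped commutatorElement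

namespace DiffCalculus

variable {K : Type*} [Group K]

def shift (F : ℕ → K) : ℕ → K := fun r => F (r + 1)

def diff (F : ℕ → K) : ℕ → K := shift F * F⁻¹

lemma diff_apply (F : ℕ → K) (r : ℕ) : diff F r = F (r + 1) * (F r)⁻¹ := rfl

lemma iterate_diff_one (s : ℕ) : diff^[s] (1 : ℕ → K) = 1 :=
  Function.iterate_fixed (funext fun _ => mul_inv_cancel 1) s

lemma iterate_diff_shift (s : ℕ) (F : ℕ → K) : diff^[s] (shift F) = shift (diff^[s] F) :=
  (Function.Commute.iterate_left (f := diff) (g := shift) (fun _ => rfl) s) F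

lemma iterate_diff_apply_succ (s : ℕ) (F : ℕ → K) (r : ℕ) :
    diff^[s] F (r + 1) = diff^[s + 1] F r * diff^[s] F r := by
  rw [Function.iterate_succ_apply', diff_apply, inv_mul_cancel_right]

lemma iterate_diff_mem {H : Subgroup K} {F : ℕ → K} (h : ∀ r, F r ∈ H) (s r : ℕ) :
    diff^[s] F r ∈ H := by
  induction s generalizing r with
  | zero => exact h r
  | succ s ih => rw [Function.iterate_succ_apply']; exact mul_mem (ih _) (inv_mem (ih _))

lemma iterate_diff_mem_of_apply_zero_mem {H : Subgroup K} {F : ℕ → K}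
    (h : ∀ j, diff^[j] F 0 ∈ H) (s r : ℕ) : diff^[s] F r ∈ H := by
  induction r generalizing s with
  | zero => exact h s
  | succ r ih => rw [iterate_diff_apply_succ]; exact mul_mem (ih _) (ih _)

lemma map_iterate_diff {Q : Type*} [Group Q] (f : K →* Q) (s : ℕ) (F : ℕ → K) (r : ℕ) :
    f (diff^[s] F r) = diff^[s] (fun r => f (F r)) r := by
  induction s generalizing F with
  | zero => rfl
  | succ s ih =>
    have hf : (fun r => f (diff F r)) = diff (fun r => f (F r)) := by
      funext r; simp only [diff_apply, map_mul, map_inv]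
    rw [Function.iterate_succ_apply, Function.iterate_succ_apply, ih, hf]

lemma iterate_diff_pow_choose (y : K) {j e : ℕ} (h : j ≤ e) :
    diff^[j] (fun r => y ^ r.choose e) = fun r => y ^ r.choose (e - j) := by
  induction j with
  | zero => rfl
  | succ j ih =>
    rw [Function.iterate_succ_apply', ih (by omega)]
    funext r
    obtain ⟨c, hc⟩ : ∃ c, e - j = c + 1 := ⟨e - j - 1, by omega⟩
    rw [diff_apply, hc, Nat.choose_succ_succ, pow_add, mul_inv_cancel_right,
      show e - (j + 1) = c by omega]

lemma iterate_diff_pow_choose_of_lt (y : K) {j e : ℕ} (h : e < j) :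
    diff^[j] (fun r => y ^ r.choose e) = 1 := by
  obtain ⟨i, rfl⟩ : ∃ i, j = i + (e + 1) := ⟨j - (e + 1), by omega⟩
  rw [Function.iterate_add_apply, Function.iterate_succ_apply', iterate_diff_pow_choose y le_rfl]
  have : diff (fun r => y ^ r.choose (e - e)) = 1 := by
    funext r; simp [diff_apply]
  rw [this, iterate_diff_one]

section Commutative

variable {S : Subgroup K} (hS : S ≤ Subgroup.centralizer S)
include hS

lemma diff_mul_of_le_centralizer {F G : ℕ → K} (hF : ∀ r, F r ∈ S) (hG : ∀ r, G r ∈ S) :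
    diff (F * G) = diff F * diff G := by
  funext r
  have hc : (F r)⁻¹ * (G (r + 1) * (G r)⁻¹) = G (r + 1) * (G r)⁻¹ * (F r)⁻¹ :=
    hS (mul_mem (hG _) (inv_mem (hG _))) _ (inv_mem (hF r))
  simp only [diff_apply, Pi.mul_apply]
  calc F (r + 1) * G (r + 1) * (F r * G r)⁻¹
      = F (r + 1) * (G (r + 1) * (G r)⁻¹ * (F r)⁻¹) := by group
    _ = F (r + 1) * (F r)⁻¹ * (G (r + 1) * (G r)⁻¹) := by rw [← hc]; group

lemma iterate_diff_mul_of_le_centralizer {F G : ℕ → K} (hF : ∀ r, F r ∈ S)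
    (hG : ∀ r, G r ∈ S) (s : ℕ) : diff^[s] (F * G) = diff^[s] F * diff^[s] G := by
  induction s generalizing F G with
  | zero => rfl
  | succ s ih =>
    simp only [Function.iterate_succ_apply]
    rw [diff_mul_of_le_centralizer hS hF hG]
    exact ih (iterate_diff_mem hF 1) (iterate_diff_mem hG 1)

end Commutative

lemma mk_iterate_diff_mul {N H : Subgroup K} [N.Normal] (hH : ⁅H, H⁆ ≤ N) {F G : ℕ → K}
    (hF : ∀ r, F r ∈ H) (hG : ∀ r, G r ∈ H) (s r : ℕ) :
    ((diff^[s] (F * G) r : K) : K ⧸ N) = (diff^[s] F r : K) * (diff^[s] G r : K) := by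
  have hS : H.map (QuotientGroup.mk' N) ≤ Subgroup.centralizer (H.map (QuotientGroup.mk' N)) := by
    rw [← Subgroup.commutator_eq_bot_iff_le_centralizer, ← Subgroup.map_commutator,
      Subgroup.map_eq_bot_iff, QuotientGroup.ker_mk']
    exact hH
  have key := iterate_diff_mul_of_le_centralizer hS (F := fun r => QuotientGroup.mk' N (F r))
    (G := fun r => QuotientGroup.mk' N (G r)) (fun r => Subgroup.mem_map_of_mem _ (hF r))
    (fun r => Subgroup.mem_map_of_mem _ (hG r)) s
  have := congrFun key r
  rw [Pi.mul_apply, ← map_iterate_diff, ← map_iterate_diff] at this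
  rw [← QuotientGroup.mk'_apply, map_iterate_diff]
  exact this

structure IsNSeries (W : ℕ → Subgroup K) : Prop where
  antitone : Antitone W
  commutator_le : ∀ i j, ⁅W i, W j⁆ ≤ W (i + j)

namespace IsNSeries

variable {W : ℕ → Subgroup K} (hW : IsNSeries W)
include hW

lemma commutatorElement_mem {a b : ℕ} {x y : K} (hx : x ∈ W a) (hy : y ∈ W b) :
    ⁅x, y⁆ ∈ W (a + b) :=
  hW.commutator_le a b (Subgroup.commutator_mem_commutator hx hy)

lemma conj_mem {a : ℕ} {x y : K} (hx : x ∈ W a) (hy : y ∈ W 0) : y * x * y⁻¹ ∈ W a := by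
  have h : ⁅y, x⁆ ∈ W a := by simpa using hW.commutatorElement_mem hy hx
  simpa [commutatorElement_def] using mul_mem h hx

lemma normal (h0 : W 0 = ⊤) (i : ℕ) : (W i).Normal :=
  ⟨fun _ hx y => hW.conj_mem hx (h0 ▸ Subgroup.mem_top y)⟩

lemma comp {f : ℕ → ℕ} (hf : Monotone f) (hadd : ∀ i j, f (i + j) ≤ f i + f j) :
    IsNSeries (W ∘ f) :=
  ⟨hW.antitone.comp_monotone hf,
    fun i j => (hW.commutator_le _ _).trans (hW.antitone (hadd i j))⟩

end IsNSeries

/-- The order `s` is bounded so that closure properties can be proved by induction on `s`. -/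
def DiffMem (W : ℕ → Subgroup K) (s a : ℕ) (F : ℕ → K) : Prop :=
  ∀ j ≤ s, ∀ r, diff^[j] F r ∈ W (a + j)

namespace DiffMem

variable {W : ℕ → Subgroup K} {s a : ℕ} {F : ℕ → K}

lemma zero_iff : DiffMem W 0 a F ↔ ∀ r, F r ∈ W a :=
  ⟨fun h => h 0 le_rfl, fun h j hj r => by rw [Nat.le_zero.1 hj]; exact h r⟩

lemma succ_iff :
    DiffMem W (s + 1) a F ↔ (∀ r, F r ∈ W a) ∧ DiffMem W s (a + 1) (diff F) := by
  refine ⟨fun h => ⟨h 0 (Nat.zero_le _), fun j hj r => ?_⟩, fun ⟨h0, h⟩ j hj r => ?_⟩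
  · rw [← Function.iterate_succ_apply, show a + 1 + j = a + (j + 1) by omega]
    exact h (j + 1) (by omega) r
  · cases j with
    | zero => exact h0 r
    | succ j =>
      rw [Function.iterate_succ_apply, show a + (j + 1) = a + 1 + j by omega]
      exact h j (by omega) r

lemma apply_mem (h : DiffMem W s a F) (r : ℕ) : F r ∈ W a := h 0 (Nat.zero_le _) r

lemma of_order_le {t : ℕ} (h : DiffMem W s a F) (ht : t ≤ s) : DiffMem W t a F :=
  fun j hj => h j (hj.trans ht)

lemma of_degree_le (hW : Antitone W) {b : ℕ} (h : DiffMem W s a F) (hb : b ≤ a) :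
    DiffMem W s b F :=
  fun j hj r => hW (by omega) (h j hj r)

lemma shift (h : DiffMem W s a F) : DiffMem W s a (shift F) := by
  intro j hj r
  rw [iterate_diff_shift]
  exact h j hj (r + 1)

end DiffMem

structure DiffMemClosed (W : ℕ → Subgroup K) (s : ℕ) : Prop where
  mul {a : ℕ} {F G : ℕ → K} : DiffMem W s a F → DiffMem W s a G → DiffMem W s a (F * G)
  inv {a : ℕ} {F : ℕ → K} : DiffMem W s a F → DiffMem W s a F⁻¹
  conj {a : ℕ} {F H : ℕ → K} :
    DiffMem W s a F → DiffMem W s 0 H → DiffMem W s a (H * F * H⁻¹)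
  commutator {a b : ℕ} {F G : ℕ → K} :
    DiffMem W s a F → DiffMem W s b G → DiffMem W s (a + b) ⁅F, G⁆

lemma diff_mul (F G : ℕ → K) : diff (F * G) = shift F * diff G * (shift F)⁻¹ * diff F := by
  funext r; simp only [diff_apply, shift, Pi.mul_apply, Pi.inv_apply]; group

lemma diff_inv (F : ℕ → K) : diff F⁻¹ = (shift F)⁻¹ * (diff F)⁻¹ * (shift F)⁻¹⁻¹ := by
  funext r; simp only [diff_apply, shift, Pi.mul_apply, Pi.inv_apply]; group

lemma diff_conj (F H : ℕ → K) :
    diff (H * F * H⁻¹) = shift H * diff F * (shift H)⁻¹ *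
      ⁅shift H * F * (shift H)⁻¹, (diff H)⁻¹⁆ := by
  funext r
  simp only [diff_apply, shift, Pi.mul_apply, Pi.inv_apply, commutatorElement_def]
  group

lemma diff_commutatorElement (F G : ℕ → K) :
    diff ⁅F, G⁆ = diff F * ⁅F, diff G⁆ * (diff F)⁻¹ * ⁅diff F * diff G, ⁅F, G⁆⁆ *
      (⁅F, G⁆ * ⁅diff F, shift G⁆ * ⁅F, G⁆⁻¹) := by
  funext r
  simp only [diff_apply, shift, Pi.mul_apply, Pi.inv_apply, commutatorElement_def]
  group

namespace DiffMemClosed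

variable {W : ℕ → Subgroup K} (hW : IsNSeries W)
include hW

lemma zero : DiffMemClosed W 0 where
  mul hF hG := DiffMem.zero_iff.2 fun r => mul_mem (hF.apply_mem r) (hG.apply_mem r)
  inv hF := DiffMem.zero_iff.2 fun r => inv_mem (hF.apply_mem r)
  conj hF hH := DiffMem.zero_iff.2 fun r => hW.conj_mem (hF.apply_mem r) (hH.apply_mem r)
  commutator hF hG := DiffMem.zero_iff.2 fun r =>
    hW.commutatorElement_mem (hF.apply_mem r) (hG.apply_mem r)

variable {s : ℕ} (ih : DiffMemClosed W s)
include ih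

lemma mul_succ {a : ℕ} {F G : ℕ → K} (hF : DiffMem W (s + 1) a F)
    (hG : DiffMem W (s + 1) a G) : DiffMem W (s + 1) a (F * G) := by
  have hσF : DiffMem W s 0 (shift F) :=
    ((hF.of_order_le s.le_succ).of_degree_le hW.antitone (Nat.zero_le a)).shift
  rw [DiffMem.succ_iff] at hF hG ⊢
  refine ⟨fun r => mul_mem (hF.1 r) (hG.1 r), ?_⟩
  rw [diff_mul]
  exact ih.mul (ih.conj hG.2 hσF) hF.2

lemma inv_succ {a : ℕ} {F : ℕ → K} (hF : DiffMem W (s + 1) a F) :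
    DiffMem W (s + 1) a F⁻¹ := by
  have hσF : DiffMem W s 0 (shift F)⁻¹ :=
    ih.inv ((hF.of_order_le s.le_succ).of_degree_le hW.antitone (Nat.zero_le a)).shift
  rw [DiffMem.succ_iff] at hF ⊢
  refine ⟨fun r => inv_mem (hF.1 r), ?_⟩
  rw [diff_inv]
  exact ih.conj (ih.inv hF.2) hσF

lemma conj_succ {a : ℕ} {F H : ℕ → K} (hF : DiffMem W (s + 1) a F)
    (hH : DiffMem W (s + 1) 0 H) : DiffMem W (s + 1) a (H * F * H⁻¹) := by
  have hσH : DiffMem W s 0 (shift H) := (hH.of_order_le s.le_succ).shift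
  have hFH : DiffMem W s a (shift H * F * (shift H)⁻¹) :=
    ih.conj (hF.of_order_le s.le_succ) hσH
  rw [DiffMem.succ_iff] at hF hH ⊢
  refine ⟨fun r => hW.conj_mem (hF.1 r) (hH.1 r), ?_⟩
  rw [diff_conj]
  exact ih.mul (ih.conj hF.2 hσH) (ih.commutator hFH (ih.inv hH.2))

lemma commutator_succ {a b : ℕ} {F G : ℕ → K} (hF : DiffMem W (s + 1) a F)
    (hG : DiffMem W (s + 1) b G) : DiffMem W (s + 1) (a + b) ⁅F, G⁆ := by
  have hFs := hF.of_order_le s.le_succ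
  have hGs := hG.of_order_le s.le_succ
  have hFG : DiffMem W s (a + b) ⁅F, G⁆ := ih.commutator hFs hGs
  rw [DiffMem.succ_iff] at hF hG ⊢
  refine ⟨fun r => hW.commutatorElement_mem (hF.1 r) (hG.1 r), ?_⟩
  obtain ⟨-, hdF⟩ := hF
  obtain ⟨-, hdG⟩ := hG
  have h1 := ih.conj (ih.commutator hFs hdG) (hdF.of_degree_le hW.antitone (Nat.zero_le _))
  have h2 := ih.commutator (ih.mul (hdF.of_degree_le hW.antitone (by omega : 1 ≤ a + 1))
    (hdG.of_degree_le hW.antitone (by omega : 1 ≤ b + 1))) hFG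
  have h3 := ih.conj (ih.commutator hdF hGs.shift) (hFG.of_degree_le hW.antitone (Nat.zero_le _))
  rw [diff_commutatorElement]
  refine ih.mul (ih.mul ?_ ?_) ?_
  · exact h1.of_degree_le hW.antitone (by omega)
  · exact h2.of_degree_le hW.antitone (by omega)
  · exact h3.of_degree_le hW.antitone (by omega)

lemma succ : DiffMemClosed W (s + 1) where
  mul := ih.mul_succ hW
  inv := ih.inv_succ hW
  conj := ih.conj_succ hW
  commutator := ih.commutator_succ hW

end DiffMemClosed

lemma IsNSeries.diffMemClosed {W : ℕ → Subgroup K} (hW : IsNSeries W) (s : ℕ) :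
    DiffMemClosed W s := by
  induction s with
  | zero => exact DiffMemClosed.zero hW
  | succ s ih => exact ih.succ hW

def levelSeries (V : ℕ → Subgroup K) (p L : ℕ) : ℕ → Subgroup K := fun j => V (max L (min j p))

def IsLevel (V : ℕ → Subgroup K) (p L : ℕ) (w : ℕ → K) : Prop :=
  ∀ s r, diff^[s] w r ∈ V (max L (min s p))

section Level

variable {V : ℕ → Subgroup K} {p L : ℕ} {w : ℕ → K}

lemma IsNSeries.levelSeries (hV : IsNSeries V) (p L : ℕ) : IsNSeries (levelSeries V p L) :=
  hV.comp (fun i j hij => by omega) (fun i j => by omega)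

lemma isLevel_iff_diffMem : IsLevel V p L w ↔ ∀ s, DiffMem (levelSeries V p L) s 0 w := by
  simp only [IsLevel, DiffMem, levelSeries, zero_add]
  exact ⟨fun h s j _ r => h j r, fun h s r => h s s le_rfl r⟩

lemma IsLevel.mul (hV : IsNSeries V) {F G : ℕ → K} (hF : IsLevel V p L F)
    (hG : IsLevel V p L G) : IsLevel V p L (F * G) := by
  rw [isLevel_iff_diffMem] at *
  exact fun s => ((hV.levelSeries p L).diffMemClosed s).mul (hF s) (hG s)

lemma IsLevel.inv (hV : IsNSeries V) {F : ℕ → K} (hF : IsLevel V p L F) :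
    IsLevel V p L F⁻¹ := by
  rw [isLevel_iff_diffMem] at *
  exact fun s => ((hV.levelSeries p L).diffMemClosed s).inv (hF s)

lemma isLevel_zero_of_iterate_diff_mem (hV : IsNSeries V) (hw : ∀ s r, diff^[s] w r ∈ V s) :
    IsLevel V p 0 w :=
  fun s r => hV.antitone (by omega) (hw s r)

lemma IsLevel.apply_mem (hw : IsLevel V p L w) (r : ℕ) : w r ∈ V L := by
  simpa using hw 0 r

lemma isLevel_pow_choose (hV : IsNSeries V) {y : K} (hy : y ∈ V L) {c : ℕ} (hc : c ≤ L) :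
    IsLevel V p L (fun r => y ^ r.choose c) := by
  intro s r
  rcases le_or_gt s c with hs | hs
  · rw [iterate_diff_pow_choose y hs]
    exact hV.antitone (by omega) (pow_mem hy _)
  · rw [iterate_diff_pow_choose_of_lt y hs]
    exact one_mem _

lemma IsLevel.succ_of_apply_zero_mem (hV : IsNSeries V) (hLp : L < p) (hw : IsLevel V p L w)
    (h0 : ∀ j ≤ L, diff^[j] w 0 ∈ V (L + 1)) : IsLevel V p (L + 1) w := by
  have hcoef : ∀ j, diff^[j] w 0 ∈ V (L + 1) := fun j => by
    rcases le_or_gt j L with hj | hj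
    · exact h0 j hj
    · exact hV.antitone (by omega) (hw j 0)
  intro s r
  rcases le_or_gt (min s p) (L + 1) with hs | hs
  · rw [show max (L + 1) (min s p) = L + 1 by omega]
    exact iterate_diff_mem_of_apply_zero_mem hcoef s r
  · rw [show max (L + 1) (min s p) = max L (min s p) by omega]
    exact hw s r

lemma pow_choose_mem (hp : p.Prime) (hpow : ∀ i, 1 ≤ i → ∀ y ∈ V i, y ^ p ∈ V p) {i c : ℕ}
    (hi : 1 ≤ i) {y : K} (hy : y ∈ V i) (hc0 : c ≠ 0) (hcp : c < p) : y ^ p.choose c ∈ V p := by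
  obtain ⟨d, hd⟩ := hp.dvd_choose_self hc0 hcp
  rw [hd, mul_comm, pow_mul]
  exact hpow i hi _ (pow_mem hy d)

variable [∀ i, (V i).Normal]

/-- Dividing off `y ^ (r choose (e + 1))`, where `y` is the `(e + 1)`-st Newton coefficient of `u`
at `0`, kills that coefficient modulo `V (L + 1)`. -/
lemma IsLevel.exists_newton_coeff_mem_succ (hV : IsNSeries V) (hp : p.Prime)
    (hpow : ∀ i, 1 ≤ i → ∀ y ∈ V i, y ^ p ∈ V p) {u : ℕ → K} {e : ℕ} (he : e < L)
    (hLp : L < p) (hu : IsLevel V p L u) (hu0 : u 0 = 1)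
    (hcoef : ∀ j ≤ e, diff^[j] u 0 ∈ V (L + 1)) :
    ∃ u', IsLevel V p L u' ∧ u' 0 = 1 ∧ (u' p ∈ V p → u p ∈ V p) ∧
      ∀ j ≤ e + 1, diff^[j] u' 0 ∈ V (L + 1) := by
  set y := diff^[e + 1] u 0
  have hy : y ∈ V L := by
    have := hu (e + 1) 0
    rwa [show max L (min (e + 1) p) = L by omega] at this
  set E : ℕ → K := fun r => y ^ r.choose (e + 1)
  have hElev : IsLevel V p L E := isLevel_pow_choose hV hy (by omega)
  have hu'lev : IsLevel V p L (E⁻¹ * u) := (hElev.inv hV).mul hV hu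
  refine ⟨E⁻¹ * u, hu'lev, by simp [E, hu0], fun h => ?_, fun j hj => ?_⟩
  · have hEp : E p ∈ V p := pow_choose_mem hp hpow (by omega) hy (by omega) (by omega)
    simpa using mul_mem hEp h
  · have hsplit := mk_iterate_diff_mul (N := V (L + 1))
      ((hV.commutator_le L L).trans (hV.antitone (by omega))) hElev.apply_mem hu'lev.apply_mem j 0
    rw [mul_inv_cancel_left] at hsplit
    have hEu : ((diff^[j] E 0 : K) : K ⧸ V (L + 1)) = (diff^[j] u 0 : K) := by
      rw [congrFun (iterate_diff_pow_choose y hj) 0]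
      rcases hj.lt_or_eq with hj | rfl
      · rw [Nat.choose_eq_zero_of_lt (by omega : 0 < e + 1 - j), pow_zero, QuotientGroup.mk_one,
          eq_comm, QuotientGroup.eq_one_iff]
        exact hcoef j (by omega)
      · simp [y]
    rw [hEu, left_eq_mul, QuotientGroup.eq_one_iff] at hsplit
    exact hsplit

variable (hV : IsNSeries V) (hp : p.Prime) (hpow : ∀ i, 1 ≤ i → ∀ y ∈ V i, y ^ p ∈ V p)
include hV hp hpow

lemma IsLevel.exists_succ (hLp : L < p) (hw : IsLevel V p L w) (hw0 : w 0 = 1) :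
    ∃ u, IsLevel V p (L + 1) u ∧ u 0 = 1 ∧ (u p ∈ V p → w p ∈ V p) := by
  have peel : ∀ e ≤ L, ∃ u, IsLevel V p L u ∧ u 0 = 1 ∧ (u p ∈ V p → w p ∈ V p) ∧
      ∀ j ≤ e, diff^[j] u 0 ∈ V (L + 1) := by
    intro e
    induction e with
    | zero =>
      refine fun _ => ⟨w, hw, hw0, id, fun j hj => ?_⟩
      rw [Nat.le_zero.1 hj, Function.iterate_zero_apply, hw0]
      exact one_mem _
    | succ e ih =>
      intro he
      obtain ⟨u, hu, hu0, hup, hcoef⟩ := ih (by omega)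
      obtain ⟨u', hu', hu'0, hu'p, hcoef'⟩ :=
        hu.exists_newton_coeff_mem_succ hV hp hpow he hLp hu0 hcoef
      exact ⟨u', hu', hu'0, hup ∘ hu'p, hcoef'⟩
  obtain ⟨u, hu, hu0, hup, hcoef⟩ := peel L le_rfl
  exact ⟨u, hu.succ_of_apply_zero_mem hV hLp hcoef, hu0, hup⟩

lemma IsLevel.apply_prime_mem (hL : L ≤ p) (hw : IsLevel V p L w) (hw0 : w 0 = 1) :
    w p ∈ V p := by
  induction hL using Nat.decreasingInduction generalizing w with
  | self => simpa using hw 0 p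
  | of_succ L hLp ih =>
    obtain ⟨u, hu, hu0, hup⟩ := hw.exists_succ hV hp hpow hLp hw0
    exact hup (ih hu hu0)

end Level

theorem IsNSeries.apply_prime_mem {V : ℕ → Subgroup K} [∀ i, (V i).Normal] (hV : IsNSeries V)
    {p : ℕ} (hp : p.Prime) (hpow : ∀ i, 1 ≤ i → ∀ y ∈ V i, y ^ p ∈ V p) {t : ℕ → K}
    (ht0 : t 0 = 1) (ht : ∀ s r, diff^[s] t r ∈ V s) : t p ∈ V p :=
  (isLevel_zero_of_iterate_diff_mem hV ht).apply_prime_mem hV hp hpow (Nat.zero_le p) ht0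

lemma isNSeries_of_le_succ {Kf : ℕ → Subgroup K} (hK0 : Kf 0 = Kf 1)
    (hdesc : ∀ i, Kf (i + 1) ≤ Kf i)
    (hcomm : ∀ i j, 1 ≤ i → 1 ≤ j → ⁅Kf i, Kf j⁆ ≤ Kf (i + j)) : IsNSeries Kf := by
  have hanti : Antitone Kf := antitone_nat_of_succ_le hdesc
  have hmax : ∀ i, Kf (max i 1) = Kf i := by
    rintro (_ | i)
    · exact hK0.symm
    · rw [max_eq_left (by omega)]
  refine ⟨hanti, fun i j => ?_⟩
  rw [← hmax i, ← hmax j]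
  exact (hcomm _ _ (le_max_right _ _) (le_max_right _ _)).trans (hanti (by omega))

lemma diff_mul_const (F : ℕ → K) (c : K) : diff (fun r => F r * c) = diff F := by
  funext r; simp only [diff_apply]; group

lemma iterate_diff_orbit (a : MulAut K) (s : ℕ) (x : K) :
    diff^[s] (fun r => (a ^ r) x) = fun r => (a ^ r) ((fun y => a y * y⁻¹)^[s] x) := by
  induction s generalizing x with
  | zero => rfl
  | succ s ih =>
    have h : diff (fun r => (a ^ r) x) = fun r => (a ^ r) (a x * x⁻¹) := by
      funext r
      rw [diff_apply, map_mul, map_inv, pow_succ, MulAut.mul_apply]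
    rw [Function.iterate_succ_apply, h, ih, Function.iterate_succ_apply]

lemma iterate_diff_orbit_mem {Kf : ℕ → Subgroup K} {a : MulAut K} {m : ℕ}
    (ha : ∀ d, ∀ x ∈ Kf d, a x ∈ Kf d) (hδ : ∀ d, ∀ x ∈ Kf d, a x * x⁻¹ ∈ Kf (m + d))
    {n : ℕ} {k : K} (hk : k ∈ Kf n) (s r : ℕ) :
    diff^[s] (fun r => (a ^ r) k * k⁻¹) r ∈ Kf (n + s * m) := by
  have hapow : ∀ d r, ∀ x ∈ Kf d, (a ^ r) x ∈ Kf d := fun d r x hx => by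
    induction r with
    | zero => exact hx
    | succ r ih => rw [pow_succ', MulAut.mul_apply]; exact ha d _ ih
  cases s with
  | zero => rw [zero_mul, add_zero]; exact mul_mem (hapow n r k hk) (inv_mem hk)
  | succ s =>
    have hδs : ∀ s, (fun y => a y * y⁻¹)^[s] k ∈ Kf (n + s * m) := fun s => by
      induction s with
      | zero => simpa using hk
      | succ s ih =>
        rw [Function.iterate_succ_apply', show n + (s + 1) * m = m + (n + s * m) by ring]
        exact hδ _ _ ih
    rw [Function.iterate_succ_apply, diff_mul_const, ← Function.iterate_succ_apply,
      iterate_diff_orbit]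
    exact hapow _ r _ (hδs (s + 1))

end DiffCalculus

open DiffCalculus

/-- Let `p` be a prime and let a group `G` act on a group `K` preserving an
N-series `K₊` (extended by `K₀ = K₁ = K`) satisfying `(Kₘ)ᵖ ⊆ K_{mp}` for all
`m ≥ 1` (an N_p-series).  Then the Johnson filtration `Gₘ = 𝓕ₘ(G)` satisfies
`(Gₘ)ᵖ ⊆ G_{mp}` for all `m ≥ 1`: its positive part is an N_p-series. -/
theorem johnson_filtration_Np {G K : Type*} [Group G] [Group K]
    (p : ℕ) (hp : p.Prime)
    (φ : G →* MulAut K) (Kf : ℕ → Subgroup K)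
    (hK1 : Kf 1 = ⊤) (hK0 : Kf 0 = Kf 1)
    (hdesc : ∀ i, Kf (i + 1) ≤ Kf i)
    (hcomm : ∀ i j, 1 ≤ i → 1 ≤ j → ⁅Kf i, Kf j⁆ ≤ Kf (i + j))
    (hact : ∀ g n, ∀ k ∈ Kf n, φ g k ∈ Kf n)
    (hNp : ∀ m, 1 ≤ m → ∀ x ∈ Kf m, x ^ p ∈ Kf (m * p)) :
    ∀ m, 1 ≤ m → ∀ g : G,
      (∀ n, ∀ k ∈ Kf n, φ g k * k⁻¹ ∈ Kf (m + n)) →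
      (∀ n, ∀ k ∈ Kf n, φ (g ^ p) k * k⁻¹ ∈ Kf (m * p + n)) := by
  intro m hm g hg n k hk
  have hKf : IsNSeries Kf := isNSeries_of_le_succ hK0 hdesc hcomm
  have hnormal : ∀ i, (Kf i).Normal := hKf.normal (hK0.trans hK1)
  have hV : IsNSeries (fun i => Kf (n + i * m)) :=
    hKf.comp (f := fun i => n + i * m)
      (fun _ _ hij => Nat.add_le_add_left (Nat.mul_le_mul_right m hij) n) (fun i j => by nlinarith)
  have hpow : ∀ i, 1 ≤ i → ∀ y ∈ Kf (n + i * m), y ^ p ∈ Kf (n + p * m) := fun i hi y hy =>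
    hKf.antitone
      (by nlinarith [Nat.mul_le_mul_left n hp.one_le, Nat.mul_le_mul_right (p * m) hi])
      (hNp _ (by nlinarith) y hy)
  have ht := hV.apply_prime_mem hp hpow (t := fun r => (φ g ^ r) k * k⁻¹) (by simp)
    (iterate_diff_orbit_mem (hact g) hg hk)
  rwa [← map_pow, add_comm, mul_comm] at ht
end

section
/- Let a group $G$ act on a group $K$ preserving the lower central series $\Gamma_+K$, and for $m\geq 0$ set $G^1_m=\ker(G\to\mathrm{Aut}(K/\Gamma_{m+1}K))$. Then for all $m\geq 1$ and $n\geq 1$, $[G^1_m,\Gamma_nK]\subseteq\Gamma_{m+n}K$; consequently $G^1_*$ coincides with the Johnson filtration $\mathcal{F}_*^{K_*}(G)$ induced by the lower central series. -/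
/-!
Fix `σ = φ g` with `σ k * k⁻¹ ∈ Γ_{m+1}` for all `k`, and induct on `n`. The `k` with
`σ k * k⁻¹ ∈ L` form a subgroup whenever `L` is normal (the equalizer of `σ` and the identity
modulo `L`), so passing from `Γ_n` to `Γ_{n+1} = ⁅Γ_n, K⁆` it suffices to treat the generators
`⁅x, y⁆` with `x ∈ Γ_n`. Write `σ x = a x` and `σ y = b y` with `a ∈ Γ_{m+n}` and `b ∈ Γ_{m+1}`.
Modulo `Γ_{m+n+1}` the element `a` is central, and `⁅x, b⁆`, `⁅b, ⁅x, y⁆⁆` vanish because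
`⁅Γ_i, Γ_j⁆ ≤ Γ_{i+j}` (three subgroups lemma); hence `σ ⁅x, y⁆ ≡ ⁅x, y⁆`.
-/

/-- The extension of the lower central series to an extended N-series:
`K₀ = ⊤` and `Kₙ = Γₙ K = lowerCentralSeries K (n-1)` for `n ≥ 1`. -/
def lcsExt (K : Type*) [Group K] : ℕ → Subgroup K
  | 0 => ⊤
  | n + 1 => (⊤ : Subgroup K).lowerCentralSeries n

open scoped commutatorElement

namespace Subgroup

variable {K : Type*} [Group K]

theorem commutator_commutator_le_of_rotate {H₁ H₂ H₃ N : Subgroup K} [N.Normal]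
    (h₁ : ⁅⁅H₂, H₃⁆, H₁⁆ ≤ N) (h₂ : ⁅⁅H₃, H₁⁆, H₂⁆ ≤ N) : ⁅⁅H₁, H₂⁆, H₃⁆ ≤ N := by
  have le_iff_map_eq_bot : ∀ A B C : Subgroup K,
      ⁅⁅A, B⁆, C⁆ ≤ N ↔ ⁅⁅A.map (QuotientGroup.mk' N), B.map (QuotientGroup.mk' N)⁆,
        C.map (QuotientGroup.mk' N)⁆ = ⊥ := by
    intro A B C
    rw [← map_commutator, ← map_commutator, map_eq_bot_iff, QuotientGroup.ker_mk']
  rw [le_iff_map_eq_bot] at h₁ h₂ ⊢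
  exact commutator_commutator_eq_bot_of_rotate h₁ h₂

theorem commutator_lowerCentralSeries_le (i j : ℕ) :
    ⁅(⊤ : Subgroup K).lowerCentralSeries i, (⊤ : Subgroup K).lowerCentralSeries j⁆ ≤
      (⊤ : Subgroup K).lowerCentralSeries (i + j + 1) := by
  induction j generalizing i with
  | zero => rfl
  | succ j ih =>
    rw [commutator_comm, lowerCentralSeries_succ]
    apply commutator_commutator_le_of_rotate
    · rw [commutator_comm ⊤, ← lowerCentralSeries_succ]
      have h := ih (i + 1)
      rwa [Nat.add_right_comm i 1 j] at h
    · exact commutator_mono (ih i) le_rfl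

theorem commutatorElement_mul_mul_mul_inv_mem {L : Subgroup K} [L.Normal] {a b x y : K}
    (ha : ∀ z, ⁅a, z⁆ ∈ L) (hxb : ⁅x, b⁆ ∈ L) (hb : ⁅b, ⁅x, y⁆⁆ ∈ L) :
    ⁅a * x, b * y⁆ * ⁅x, y⁆⁻¹ ∈ L := by
  have expand : ⁅a * x, b * y⁆ * ⁅x, y⁆⁻¹ =
      (a * (⁅x, b⁆ * ⁅b, ⁅x, y⁆⁆) * a⁻¹) * ⁅a, ⁅x, y⁆⁆ * (⁅x, y⁆ * ⁅a, b * y⁆ * ⁅x, y⁆⁻¹) := by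
    simp only [commutatorElement_def]
    group
  rw [expand]
  exact mul_mem (mul_mem (Normal.conj_mem ‹_› _ (mul_mem hxb hb) a) (ha _))
    (Normal.conj_mem ‹_› _ (ha _) _)

theorem mem_eqLocus_mk'_comp_iff (L : Subgroup K) [L.Normal] (σ : K →* K) (k : K) :
    k ∈ ((QuotientGroup.mk' L).comp σ).eqLocus (QuotientGroup.mk' L) ↔ σ k * k⁻¹ ∈ L := by
  rw [← div_eq_mul_inv, ← QuotientGroup.eq_iff_div_mem]
  rfl

theorem mul_inv_mem_lowerCentralSeries_add (σ : K →* K) {m : ℕ}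
    (hσ : ∀ k, σ k * k⁻¹ ∈ (⊤ : Subgroup K).lowerCentralSeries m) (n : ℕ) :
    ∀ k ∈ (⊤ : Subgroup K).lowerCentralSeries n,
      σ k * k⁻¹ ∈ (⊤ : Subgroup K).lowerCentralSeries (m + n) := by
  induction n with
  | zero => exact fun k _ ↦ hσ k
  | succ n ih =>
    set L := (⊤ : Subgroup K).lowerCentralSeries (m + (n + 1))
    suffices (⊤ : Subgroup K).lowerCentralSeries (n + 1) ≤
        ((QuotientGroup.mk' L).comp σ).eqLocus (QuotientGroup.mk' L) from
      fun k hk ↦ (mem_eqLocus_mk'_comp_iff L σ k).mp (this hk)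
    rw [lowerCentralSeries_succ, commutator_le]
    intro x hx y _
    rw [mem_eqLocus_mk'_comp_iff, map_commutatorElement,
      ← inv_mul_cancel_right (σ x) x, ← inv_mul_cancel_right (σ y) y]
    have hxy : ⁅x, y⁆ ∈ (⊤ : Subgroup K).lowerCentralSeries (n + 1) :=
      commutator_mem_commutator hx (mem_top y)
    refine commutatorElement_mul_mul_mul_inv_mem (fun z ↦ ?_) ?_ ?_
    · exact commutator_mem_commutator (ih x hx) (mem_top z)
    · have h := commutator_lowerCentralSeries_le n m (commutator_mem_commutator hx (hσ y))
      rwa [Nat.add_comm n m] at h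
    · exact lowerCentralSeries_antitone ⊤ (by omega)
        (commutator_lowerCentralSeries_le m (n + 1) (commutator_mem_commutator (hσ y) hxy))

end Subgroup

theorem lcsExt_antitone (K : Type*) [Group K] : Antitone (lcsExt K) := by
  refine antitone_nat_of_succ_le fun n ↦ ?_
  cases n with
  | zero => exact le_top
  | succ n => exact Subgroup.lowerCentralSeries_antitone ⊤ n.le_succ

theorem andreadakis_coincidence_general {G K : Type*} [Group G] [Group K]
    (φ : G →* MulAut K) :
    -- `[G¹ₘ, ΓₙK] ⊆ Γ_{m+n}K`:  (here `ΓₙK = lowerCentralSeries K (n-1)`)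
    (∀ m, 1 ≤ m → ∀ g : G,
      (∀ k : K, φ g k * k⁻¹ ∈ (⊤ : Subgroup K).lowerCentralSeries m) →
      ∀ n, ∀ k ∈ (⊤ : Subgroup K).lowerCentralSeries n,
        φ g k * k⁻¹ ∈ (⊤ : Subgroup K).lowerCentralSeries (m + n)) ∧
    -- consequently `G¹ₘ = 𝓕ₘ(G)` for every `m`:
    (∀ m, ∀ g : G,
      (∀ k : K, φ g k * k⁻¹ ∈ lcsExt K (m + 1)) ↔
      (∀ n, ∀ k ∈ lcsExt K n, φ g k * k⁻¹ ∈ lcsExt K (m + n))) := by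
  refine ⟨fun m _ g ↦ Subgroup.mul_inv_mem_lowerCentralSeries_add (φ g).toMonoidHom,
    fun m g ↦ ⟨fun h n ↦ ?_, fun h k ↦ h 1 k (Subgroup.mem_top k)⟩⟩
  cases n with
  | zero => exact fun k _ ↦ lcsExt_antitone K m.le_succ (h k)
  | succ n => exact Subgroup.mul_inv_mem_lowerCentralSeries_add (φ g).toMonoidHom h n

/-- Let a group `G` act on a group `K` preserving the lower central series
`Γ₊K`, and for `m ≥ 0` let `G¹ₘ = ker(G → Aut(K/Γ_{m+1}K))`, i.e. the set of `g`
with `g(k)k⁻¹ ∈ Γ_{m+1}K` for all `k ∈ K`.  Then `[G¹ₘ, ΓₙK] ⊆ Γ_{m+n}K` for all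
`m, n ≥ 1`; consequently `G¹_*` coincides with the Johnson filtration induced by
the lower central series (extended with `K₀ = K₁ = K`).  Here
`Γ_{n+1}K = lowerCentralSeries K n`. -/
theorem andreadakis_coincidence {G K : Type*} [Group G] [Group K]
    (φ : G →* MulAut K)
    (hact : ∀ g n, ∀ k ∈ (⊤ : Subgroup K).lowerCentralSeries n, φ g k ∈ (⊤ : Subgroup K).lowerCentralSeries n) :
    -- `[G¹ₘ, ΓₙK] ⊆ Γ_{m+n}K`:  (here `ΓₙK = lowerCentralSeries K (n-1)`)
    (∀ m, 1 ≤ m → ∀ g : G,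
      (∀ k : K, φ g k * k⁻¹ ∈ (⊤ : Subgroup K).lowerCentralSeries m) →
      ∀ n, ∀ k ∈ (⊤ : Subgroup K).lowerCentralSeries n,
        φ g k * k⁻¹ ∈ (⊤ : Subgroup K).lowerCentralSeries (m + n)) ∧
    -- consequently `G¹ₘ = 𝓕ₘ(G)` for every `m`:
    (∀ m, ∀ g : G,
      (∀ k : K, φ g k * k⁻¹ ∈ lcsExt K (m + 1)) ↔
      (∀ n, ∀ k ∈ lcsExt K n, φ g k * k⁻¹ ∈ lcsExt K (m + n))) :=
  andreadakis_coincidence_general φ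
end
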